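/- arXiv:1503.07624 — 5 statements merged into one kernel-verified Lean document; each statement's English description precedes it below -/
import Mathlib

section
/- Suppose ARC and OPT (cache size N each) are run in parallel on the same request sequence, with OPT serving each request before ARC. If ARC has a miss on the current request and the requested page is not in ARC's history B₁ ∪ B₂, then ℓ' = t₁' + t₂' + b₁' + b₂' < N; consequently ℓ₁' < N and ℓ₂' < N. -/
abbrev Page := ℕ

/-- A valid offline demand-paging execution with cache size `N` on request
sequence `σ`, starting from the empty cache. `C i` is the cache just before
serving request `i` (so `C (i+1)` is the cache just after serving it).
Demand paging: on a hit the cache is unchanged; on a fault only the requested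
page may be brought in. -/
def OptExec (N : ℕ) (σ : List Page) (C : ℕ → Finset Page) : Prop :=
  C 0 = ∅ ∧
  (∀ i, (C i).card ≤ N) ∧
  ∀ i, i < σ.length →
    σ.getD i 0 ∈ C (i + 1) ∧
    C (i + 1) ⊆ C i ∪ {σ.getD i 0} ∧
    (σ.getD i 0 ∈ C i → C (i + 1) = C i)

/-- Number of page faults incurred by an offline execution `C` on `σ`. -/
def optFaults (σ : List Page) (C : ℕ → Finset Page) : ℕ :=
  ((List.range σ.length).filter (fun i => decide (σ.getD i 0 ∉ C i))).length

/-- The fault count of an optimal offline demand-paging algorithm (OPT)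
with cache size `N` on `σ`. -/
noncomputable def optCost (N : ℕ) (σ : List Page) : ℕ :=
  sInf {k | ∃ C, OptExec N σ C ∧ optFaults σ C = k}

/-- The state of the ARC cache: main lists `T1`, `T2` and history lists
`B1`, `B2` (each kept in recency order, MRU at the head, LRU at the end),
together with the adaptive parameter `p`. -/
structure ArcState where
  T1 : List Page
  T2 : List Page
  B1 : List Page
  B2 : List Page
  p  : ℕ

/-- ARC starts with empty lists and `p = 0`. -/
def ArcState.init : ArcState := ⟨[], [], [], [], 0⟩

/-- ARC's subroutine REPLACE: demote `LRU(T1)` to the MRU position of `B1`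
if `|T1| ≥ 1` and either (the requested page was in `B2` and `|T1| = p`) or
`|T1| > p`; otherwise demote `LRU(T2)` to the MRU position of `B2`. -/
def arcReplace (xInB2 : Bool) (s : ArcState) : ArcState :=
  if 1 ≤ s.T1.length ∧ ((xInB2 = true ∧ s.T1.length = s.p) ∨ s.p < s.T1.length) then
    { s with T1 := s.T1.dropLast, B1 := s.T1.getLast?.toList ++ s.B1 }
  else
    { s with T2 := s.T2.dropLast, B2 := s.T2.getLast?.toList ++ s.B2 }

/-- One step of ARC (cache size `N`, with the ±1 adaptation rule) on a
requested page `x`. -/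
def arcStep (N : ℕ) (s : ArcState) (x : Page) : ArcState :=
  if x ∈ s.T1 ∨ x ∈ s.T2 then
    -- cache hit: move `x` to the MRU position of `T2`
    { s with T1 := s.T1.erase x, T2 := x :: s.T2.erase x }
  else if x ∈ s.B1 then
    -- history hit in B1: adapt `p := min (p+1) N`, REPLACE, move `x` to MRU(T2)
    let s2 := arcReplace false { s with p := min (s.p + 1) N }
    { s2 with B1 := s2.B1.erase x, T2 := x :: s2.T2 }
  else if x ∈ s.B2 then
    -- history hit in B2: adapt `p := max (p-1) 0`, REPLACE, move `x` to MRU(T2)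
    let s2 := arcReplace true { s with p := s.p - 1 }
    { s2 with B2 := s2.B2.erase x, T2 := x :: s2.T2 }
  else
    -- cache and directory miss
    let s2 :=
      if s.T1.length + s.B1.length = N then
        if s.T1.length < N then
          arcReplace false { s with B1 := s.B1.dropLast }
        else
          { s with T1 := s.T1.dropLast }
      else if s.T1.length + s.B1.length < N ∧
          N ≤ s.T1.length + s.T2.length + s.B1.length + s.B2.length then
        arcReplace false
          (if s.T1.length + s.T2.length + s.B1.length + s.B2.length = 2 * N then
            { s with B2 := s.B2.dropLast }
          else s)
      else s
    { s2 with T1 := x :: s2.T1 }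

/-- Run ARC on a request sequence. -/
def arcRun (N : ℕ) : ArcState → List Page → ArcState
  | s, [] => s
  | s, x :: xs => arcRun N (arcStep N s x) xs

/-- Number of page faults incurred by ARC on a request sequence. -/
def arcCost (N : ℕ) : ArcState → List Page → ℕ
  | _, [] => 0
  | s, x :: xs => (if x ∈ s.T1 ∨ x ∈ s.T2 then 0 else 1) + arcCost N (arcStep N s x) xs

/-- `t = t₁ + t₂`, the number of pages in ARC's cache. -/
def arcT (s : ArcState) : ℕ := s.T1.length + s.T2.length

/-- `TOP(X)` for a recency-ordered list `X`: the longest prefix (i.e. the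
largest set of most-recently-used pages) of `X` all of whose pages are in
OPT's cache `O`; `topLen` is its size. -/
def topLen (X : List Page) (O : Finset Page) : ℕ :=
  (X.takeWhile (fun q => decide (q ∈ O))).length

/-- `t₁' = |TOP(T1)|`. -/
def arcT1' (s : ArcState) (O : Finset Page) : ℕ := topLen s.T1 O

/-- `t₂' = |TOP(T2)|`. -/
def arcT2' (s : ArcState) (O : Finset Page) : ℕ := topLen s.T2 O

/-- `b₁' = |TOP(L1) ∩ B1|` where `L1 = T1 · B1`. -/
def arcB1' (s : ArcState) (O : Finset Page) : ℕ :=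
  (((s.T1 ++ s.B1).takeWhile (fun q => decide (q ∈ O))).filter
    (fun q => decide (q ∈ s.B1))).length

/-- `b₂' = |TOP(L2) ∩ B2|` where `L2 = T2 · B2`. -/
def arcB2' (s : ArcState) (O : Finset Page) : ℕ :=
  (((s.T2 ++ s.B2).takeWhile (fun q => decide (q ∈ O))).filter
    (fun q => decide (q ∈ s.B2))).length

/-- The potential `Φ = p − [(b₁'−t) + 2(t₁'−t) + 3(b₂'−t) + 4(t₂'−t)]`
with the value `t` supplied explicitly. -/
def arcPhiAt (s : ArcState) (O : Finset Page) (t : ℤ) : ℤ :=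
  (s.p : ℤ) - (((arcB1' s O : ℤ) - t) + 2 * ((arcT1' s O : ℤ) - t)
    + 3 * ((arcB2' s O : ℤ) - t) + 4 * ((arcT2' s O : ℤ) - t))

/-- The potential `Φ = p − [(b₁'−t) + 2(t₁'−t) + 3(b₂'−t) + 4(t₂'−t)]`. -/
def arcPhi (s : ArcState) (O : Finset Page) : ℤ :=
  arcPhiAt s O (arcT s)

/-- ARC's cache directory: all pages it tracks. -/
def arcDir (s : ArcState) : List Page := s.T1 ++ s.T2 ++ s.B1 ++ s.B2

/-!
ARC's directory `T₁ ++ T₂ ++ B₁ ++ B₂` never holds a page twice: a step only moves pages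
between the lists, drops pages, or inserts the requested page when it is not in the directory.
Hence `TOP(T₁)`, `TOP(T₂)`, `TOP(L₁) ∩ B₁` and `TOP(L₂) ∩ B₂` are disjoint pieces of the
directory, all inside OPT's cache. The requested page lies in OPT's cache (OPT serves it first)
but not in the directory, so these pieces fill at most `N - 1` slots. Finally
`ℓᵢ' ≤ tᵢ' + bᵢ'`.
-/

lemma List.filter_mem_sublist_of_sublist_append {α : Type*} [DecidableEq α] {l A B : List α}
    (hl : l.Sublist (A ++ B)) (hAB : A.Disjoint B) :
    (l.filter (fun a => decide (a ∈ B))).Sublist B := by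
  have hA : A.filter (fun a => decide (a ∈ B)) = [] :=
    List.filter_eq_nil_iff.2 fun a ha => by simpa using hAB ha
  have hB : B.filter (fun a => decide (a ∈ B)) = B := List.filter_eq_self.2 fun a ha => by simpa
  simpa [List.filter_append, hA, hB] using hl.filter (fun a => decide (a ∈ B))

lemma List.length_takeWhile_append_le {α : Type*} [DecidableEq α] (p : α → Bool)
    (A B : List α) :
    ((A ++ B).takeWhile p).length ≤ (A.takeWhile p).length +
      (((A ++ B).takeWhile p).filter (fun a => decide (a ∈ B))).length := by
  rw [List.takeWhile_append]
  split_ifs with h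
  · have hB : (B.takeWhile p).filter (fun a => decide (a ∈ B)) = B.takeWhile p :=
      List.filter_eq_self.2 fun a ha => by simpa using (List.takeWhile_sublist p).subset ha
    simp [List.filter_append, hB, h]
  · exact Nat.le_add_right _ _

lemma List.count_eq_count_erase_add {α : Type*} [DecidableEq α] {l : List α} {x : α} (a : α)
    (hx : x ∈ l) : l.count a = (l.erase x).count a + if x == a then 1 else 0 := by
  rw [(List.perm_cons_erase hx).count_eq, List.count_cons]

lemma count_arcDir (s : ArcState) (a : Page) :
    (arcDir s).count a = s.T1.count a + s.T2.count a + s.B1.count a + s.B2.count a := by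
  simp only [arcDir, List.count_append]

lemma count_arcDir_arcReplace (b : Bool) (s : ArcState) (a : Page) :
    (arcDir (arcReplace b s)).count a = (arcDir s).count a := by
  have h₁ := congrArg (List.count a) s.T1.take_append_getLast?
  have h₂ := congrArg (List.count a) s.T2.take_append_getLast?
  rw [← List.dropLast_eq_take, List.count_append] at h₁ h₂
  unfold arcReplace
  split <;> (simp only [count_arcDir, List.count_append]; omega)

lemma B1_suffix_arcReplace (b : Bool) (s : ArcState) : s.B1 <:+ (arcReplace b s).B1 := by
  unfold arcReplace
  split
  · exact List.suffix_append _ _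
  · exact List.suffix_refl _

lemma B2_suffix_arcReplace (b : Bool) (s : ArcState) : s.B2 <:+ (arcReplace b s).B2 := by
  unfold arcReplace
  split
  · exact List.suffix_refl _
  · exact List.suffix_append _ _

lemma count_arcDir_arcStep_le_of_mem (N : ℕ) {s : ArcState} {x : Page} (hx : x ∈ arcDir s)
    (a : Page) : (arcDir (arcStep N s x)).count a ≤ (arcDir s).count a := by
  unfold arcStep
  split
  next hT =>
    have h₁ := (s.T1.erase_sublist (a := x)).count_le a
    have h₂ := (s.T2.erase_sublist (a := x)).count_le a
    simp only [count_arcDir, List.count_cons]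
    rcases hT with hT₁ | hT₂
    · have := List.count_eq_count_erase_add a hT₁
      omega
    · have := List.count_eq_count_erase_add a hT₂
      omega
  split
  next hB₁ =>
    have h₁ := List.count_eq_count_erase_add a
      ((B1_suffix_arcReplace false { s with p := min (s.p + 1) N }).subset hB₁)
    have h₂ := count_arcDir_arcReplace false { s with p := min (s.p + 1) N } a
    simp only [count_arcDir, List.count_cons] at h₂ ⊢
    omega
  split
  next hB₂ =>
    have h₁ := List.count_eq_count_erase_add a
      ((B2_suffix_arcReplace true { s with p := s.p - 1 }).subset hB₂)
    have h₂ := count_arcDir_arcReplace true { s with p := s.p - 1 } a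
    simp only [count_arcDir, List.count_cons] at h₂ ⊢
    omega
  next hT hB₁ hB₂ =>
    simp only [arcDir, List.mem_append] at hx
    tauto

lemma count_arcDir_arcStep_le_of_not_mem (N : ℕ) {s : ArcState} {x : Page} (hx : x ∉ arcDir s)
    (a : Page) : (arcDir (arcStep N s x)).count a ≤ (x :: arcDir s).count a := by
  simp only [arcDir, List.mem_append, not_or] at hx
  unfold arcStep
  rw [if_neg (by tauto), if_neg hx.1.2, if_neg hx.2]
  suffices h : ∀ s₂ : ArcState, (arcDir s₂).count a ≤ (arcDir s).count a →
      (arcDir { s₂ with T1 := x :: s₂.T1 }).count a ≤ (x :: arcDir s).count a by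
    refine h _ ?_
    have h₁ := (s.T1.dropLast_sublist).count_le a
    have h₂ := (s.B1.dropLast_sublist).count_le a
    have h₃ := (s.B2.dropLast_sublist).count_le a
    split_ifs
    · rw [count_arcDir_arcReplace]; simp only [count_arcDir]; omega
    · simp only [count_arcDir]; omega
    · rw [count_arcDir_arcReplace]; simp only [count_arcDir]; omega
    · rw [count_arcDir_arcReplace]
    · exact le_rfl
  intro s₂ h
  simp only [count_arcDir, List.count_cons] at h ⊢
  omega

lemma nodup_arcDir_arcStep (N : ℕ) (s : ArcState) (x : Page) (h : (arcDir s).Nodup) :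
    (arcDir (arcStep N s x)).Nodup := by
  rw [List.nodup_iff_count_le_one]
  by_cases hx : x ∈ arcDir s
  · exact fun a => (count_arcDir_arcStep_le_of_mem N hx a).trans
      (List.nodup_iff_count_le_one.1 h a)
  · exact fun a => (count_arcDir_arcStep_le_of_not_mem N hx a).trans
      (List.nodup_iff_count_le_one.1 (h.cons hx) a)

lemma nodup_arcDir_arcRun (N : ℕ) (xs : List Page) :
    ∀ s : ArcState, (arcDir s).Nodup → (arcDir (arcRun N s xs)).Nodup := by
  induction xs with
  | nil => exact fun _ h => h
  | cons x xs ih => exact fun s h => ih _ (nodup_arcDir_arcStep N s x h)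

lemma nodup_arcDir_arcRun_init (N : ℕ) (xs : List Page) :
    (arcDir (arcRun N ArcState.init xs)).Nodup :=
  nodup_arcDir_arcRun N xs _ List.nodup_nil

section ArcTop

variable (s : ArcState) (O : Finset Page)

def arcTop : List Page :=
  s.T1.takeWhile (fun q => decide (q ∈ O)) ++ s.T2.takeWhile (fun q => decide (q ∈ O))
    ++ ((s.T1 ++ s.B1).takeWhile (fun q => decide (q ∈ O))).filter (fun q => decide (q ∈ s.B1))
    ++ ((s.T2 ++ s.B2).takeWhile (fun q => decide (q ∈ O))).filter (fun q => decide (q ∈ s.B2))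

lemma length_arcTop :
    (arcTop s O).length = arcT1' s O + arcT2' s O + arcB1' s O + arcB2' s O := by
  simp only [arcTop, List.length_append]
  rfl

lemma mem_of_mem_arcTop {a : Page} (ha : a ∈ arcTop s O) : a ∈ O := by
  simp only [arcTop, List.mem_append, List.mem_filter] at ha
  rcases ha with ((h | h) | ⟨h, -⟩) | ⟨h, -⟩ <;> simpa using List.mem_takeWhile_imp h

lemma arcTop_sublist_arcDir (h : (arcDir s).Nodup) : (arcTop s O).Sublist (arcDir s) := by
  have h₁ : (s.T1 ++ s.B1).Nodup := h.sublist (by simp [arcDir])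
  have h₂ : (s.T2 ++ s.B2).Nodup := h.sublist (by simp [arcDir])
  refine (((List.takeWhile_sublist _).append (List.takeWhile_sublist _)).append ?_).append ?_
  · exact List.filter_mem_sublist_of_sublist_append (List.takeWhile_sublist _)
      (List.disjoint_of_nodup_append h₁)
  · exact List.filter_mem_sublist_of_sublist_append (List.takeWhile_sublist _)
      (List.disjoint_of_nodup_append h₂)

lemma length_arcTop_lt {N : ℕ} {x : Page} (h : (arcDir s).Nodup) (hx : x ∉ arcDir s)
    (hxO : x ∈ O) (hO : O.card ≤ N) : (arcTop s O).length < N := by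
  have hsub := arcTop_sublist_arcDir s O h
  have hle : (arcTop s O).toFinset ⊆ O.erase x := fun a ha => by
    rw [List.mem_toFinset] at ha
    exact Finset.mem_erase.2 ⟨fun hax => hx (hax ▸ hsub.subset ha), mem_of_mem_arcTop s O ha⟩
  have := Finset.card_le_card hle
  rw [List.toFinset_card_of_nodup (h.sublist hsub), Finset.card_erase_of_mem hxO] at this
  have := Finset.card_pos.2 ⟨x, hxO⟩
  omega

lemma topLen_T1_append_B1_le : topLen (s.T1 ++ s.B1) O ≤ arcT1' s O + arcB1' s O :=
  List.length_takeWhile_append_le _ _ _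

lemma topLen_T2_append_B2_le : topLen (s.T2 ++ s.B2) O ≤ arcT2' s O + arcB2' s O :=
  List.length_takeWhile_append_le _ _ _

end ArcTop

theorem arc_lemma_a_general (N : ℕ) (σ : List Page) (C : ℕ → Finset Page)
    (hC : OptExec N σ C)
    (j : ℕ) (hj : j < σ.length)
    (s : ArcState) (hs : s = arcRun N ArcState.init (σ.take j))
    (hmiss : σ.getD j 0 ∉ s.T1 ∧ σ.getD j 0 ∉ s.T2)
    (hnohist : σ.getD j 0 ∉ s.B1 ∧ σ.getD j 0 ∉ s.B2) :
    arcT1' s (C (j + 1)) + arcT2' s (C (j + 1))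
        + arcB1' s (C (j + 1)) + arcB2' s (C (j + 1)) < N ∧
      topLen (s.T1 ++ s.B1) (C (j + 1)) < N ∧
      topLen (s.T2 ++ s.B2) (C (j + 1)) < N := by
  have hnd : (arcDir s).Nodup := hs ▸ nodup_arcDir_arcRun_init N _
  have hx : σ.getD j 0 ∉ arcDir s := by
    simp only [arcDir, List.mem_append, not_or]
    exact ⟨⟨hmiss, hnohist.1⟩, hnohist.2⟩
  have hℓ := length_arcTop s _ ▸ length_arcTop_lt s _ hnd hx (hC.2.2 j hj).1 (hC.2.1 (j + 1))
  have hℓ₁ := topLen_T1_append_B1_le s (C (j + 1))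
  have hℓ₂ := topLen_T2_append_B2_le s (C (j + 1))
  exact ⟨hℓ, by omega, by omega⟩

/-- Lemma `lem:a`. In the parallel execution of ARC and OPT
(OPT serving each request first), if ARC misses on request `σ_j` and the
requested page is not in ARC's history `B₁ ∪ B₂`, then
`ℓ' = t₁' + t₂' + b₁' + b₂' < N`; consequently `ℓ₁' < N` and `ℓ₂' < N`
(the primed quantities being taken w.r.t. OPT's cache `C (j+1)`, i.e. after
OPT has served `σ_j`). -/
theorem arc_lemma_a (N : ℕ) (σ : List Page) (C : ℕ → Finset Page)
    (hC : OptExec N σ C) (hCopt : optFaults σ C = optCost N σ)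
    (j : ℕ) (hj : j < σ.length)
    (s : ArcState) (hs : s = arcRun N ArcState.init (σ.take j))
    (hmiss : σ.getD j 0 ∉ s.T1 ∧ σ.getD j 0 ∉ s.T2)
    (hnohist : σ.getD j 0 ∉ s.B1 ∧ σ.getD j 0 ∉ s.B2) :
    arcT1' s (C (j + 1)) + arcT2' s (C (j + 1))
        + arcB1' s (C (j + 1)) + arcB2' s (C (j + 1)) < N ∧
      topLen (s.T1 ++ s.B1) (C (j + 1)) < N ∧
      topLen (s.T2 ++ s.B2) (C (j + 1)) < N :=
  arc_lemma_a_general N σ C hC j hj s hs hmiss hnohist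
end

section
/- A call to ARC's procedure REPLACE either moves an element from T₁ to B₁ or from T₂ to B₂, and in either case the resulting change ΔΦ_R in the potential Φ = p − [(b₁'−t) + 2(t₁'−t) + 3(b₂'−t) + 4(t₂'−t)] satisfies ΔΦ_R ≤ 1. Specifically, if the moved element lies in T₁' (resp. T₂') then the potential change is +1, and if it lies in T₁ − T₁' (resp. T₂ − T₂') then the potential does not change. -/
namespace List

variable {α : Type*} [DecidableEq α]

theorem length_takeWhile_append_singleton (P : α → Bool) {A : List α} {q : α} (hq : q ∉ A) :
    ((A ++ [q]).takeWhile P).length =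
      (A.takeWhile P).length + if q ∈ (A ++ [q]).takeWhile P then 1 else 0 := by
  rw [takeWhile_append]
  split_ifs with hA hmem hmem
  · cases hP : P q <;> simp_all
  · cases hP : P q <;> simp_all
  · exact absurd ((takeWhile_prefix P).subset hmem) hq
  · rfl

theorem length_filter_mem_takeWhile_append (P : α → Bool) {T B : List α}
    (hTB : Disjoint T B) :
    (((T ++ B).takeWhile P).filter (fun x => decide (x ∈ B))).length + (T.takeWhile P).length =
      ((T ++ B).takeWhile P).length := by
  have hT : ∀ x ∈ T.takeWhile P, ¬decide (x ∈ B) = true := fun x hx hxB =>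
    hTB ((takeWhile_prefix P).subset hx) (of_decide_eq_true hxB)
  rw [takeWhile_append]
  split_ifs with hA
  · have hB : ∀ x ∈ B.takeWhile P, decide (x ∈ B) = true := fun x hx =>
      decide_eq_true ((takeWhile_prefix P).subset hx)
    have hTT : T.takeWhile P = T := (takeWhile_prefix P).eq_of_length hA
    rw [hTT] at hT ⊢
    simp [filter_append, filter_eq_nil_iff.2 hT, filter_eq_self.2 hB, Nat.add_comm]
  · simp [filter_eq_nil_iff.2 hT]

end List

theorem arcB1'_add_arcT1' (s : ArcState) (O : Finset Page) (h : s.T1.Disjoint s.B1) :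
    arcB1' s O + arcT1' s O = topLen (s.T1 ++ s.B1) O :=
  List.length_filter_mem_takeWhile_append _ h

theorem arcB2'_add_arcT2' (s : ArcState) (O : Finset Page) (h : s.T2.Disjoint s.B2) :
    arcB2' s O + arcT2' s O = topLen (s.T2 ++ s.B2) O :=
  List.length_filter_mem_takeWhile_append _ h

theorem arcPhiAt_eq (s : ArcState) (O : Finset Page) (t : ℤ)
    (h₁ : s.T1.Disjoint s.B1) (h₂ : s.T2.Disjoint s.B2) :
    arcPhiAt s O t = s.p + 10 * t - (topLen (s.T1 ++ s.B1) O + arcT1' s O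
      + 3 * topLen (s.T2 ++ s.B2) O + arcT2' s O) := by
  have e₁ := arcB1'_add_arcT1' s O h₁
  have e₂ := arcB2'_add_arcT2' s O h₂
  simp only [arcPhiAt]
  omega

theorem arcPhiAt_demote_T1_sub (s : ArcState) (O : Finset Page) (t : ℤ) {A : List Page}
    {q : Page} (hT1 : s.T1 = A ++ [q]) (h₁ : (s.T1 ++ s.B1).Nodup) (h₂ : s.T2.Disjoint s.B2) :
    arcPhiAt { s with T1 := A, B1 := q :: s.B1 } O t - arcPhiAt s O t =
      if q ∈ s.T1.takeWhile (fun r => decide (r ∈ O)) then 1 else 0 := by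
  have hA : A.Disjoint (q :: s.B1) := by
    rw [hT1, List.append_assoc] at h₁
    exact List.disjoint_of_nodup_append h₁
  have hL : A ++ q :: s.B1 = s.T1 ++ s.B1 := by simp [hT1]
  have hlen := List.length_takeWhile_append_singleton (fun r => decide (r ∈ O))
    (List.disjoint_cons_right.1 hA).1
  rw [arcPhiAt_eq { s with T1 := A, B1 := q :: s.B1 } O t hA h₂,
    arcPhiAt_eq s O t (List.disjoint_of_nodup_append h₁) h₂]
  simp only [arcT1', arcT2', topLen, hL, hT1, hlen]
  split_ifs <;> push_cast <;> ring

theorem arcPhiAt_demote_T2_sub (s : ArcState) (O : Finset Page) (t : ℤ) {A : List Page}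
    {q : Page} (hT2 : s.T2 = A ++ [q]) (h₁ : s.T1.Disjoint s.B1) (h₂ : (s.T2 ++ s.B2).Nodup) :
    arcPhiAt { s with T2 := A, B2 := q :: s.B2 } O t - arcPhiAt s O t =
      if q ∈ s.T2.takeWhile (fun r => decide (r ∈ O)) then 1 else 0 := by
  have hA : A.Disjoint (q :: s.B2) := by
    rw [hT2, List.append_assoc] at h₂
    exact List.disjoint_of_nodup_append h₂
  have hL : A ++ q :: s.B2 = s.T2 ++ s.B2 := by simp [hT2]
  have hlen := List.length_takeWhile_append_singleton (fun r => decide (r ∈ O))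
    (List.disjoint_cons_right.1 hA).1
  rw [arcPhiAt_eq { s with T2 := A, B2 := q :: s.B2 } O t h₁ hA,
    arcPhiAt_eq s O t h₁ (List.disjoint_of_nodup_append h₂)]
  simp only [arcT1', arcT2', topLen, hL, hT2, hlen]
  split_ifs <;> push_cast <;> ring

theorem arc_replace_lemma_general (s : ArcState) (xInB2 : Bool)
    (O : Finset Page)
    (hnd : (s.T1 ++ s.T2 ++ s.B1 ++ s.B2).Nodup)
    (hcall : (1 ≤ s.T1.length ∧
        ((xInB2 = true ∧ s.T1.length = s.p) ∨ s.p < s.T1.length)) ∨ s.T2 ≠ []) :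
    ((∃ q, s.T1.getLast? = some q ∧ (arcReplace xInB2 s).T1 = s.T1.dropLast ∧
        (arcReplace xInB2 s).B1 = q :: s.B1) ∨
      (∃ q, s.T2.getLast? = some q ∧ (arcReplace xInB2 s).T2 = s.T2.dropLast ∧
        (arcReplace xInB2 s).B2 = q :: s.B2)) ∧
    arcPhiAt (arcReplace xInB2 s) O (arcT s) - arcPhiAt s O (arcT s) ≤ 1 ∧
    (∀ q, (arcReplace xInB2 s).B1 = q :: s.B1 →
      (q ∈ s.T1.takeWhile (fun r => decide (r ∈ O)) →
        arcPhiAt (arcReplace xInB2 s) O (arcT s) - arcPhiAt s O (arcT s) = 1) ∧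
      (q ∉ s.T1.takeWhile (fun r => decide (r ∈ O)) →
        arcPhiAt (arcReplace xInB2 s) O (arcT s) - arcPhiAt s O (arcT s) = 0)) ∧
    (∀ q, (arcReplace xInB2 s).B2 = q :: s.B2 →
      (q ∈ s.T2.takeWhile (fun r => decide (r ∈ O)) →
        arcPhiAt (arcReplace xInB2 s) O (arcT s) - arcPhiAt s O (arcT s) = 1) ∧
      (q ∉ s.T2.takeWhile (fun r => decide (r ∈ O)) →
        arcPhiAt (arcReplace xInB2 s) O (arcT s) - arcPhiAt s O (arcT s) = 0)) := by
  have hnd₁ : (s.T1 ++ s.B1).Nodup := hnd.sublist (by simp)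
  have hnd₂ : (s.T2 ++ s.B2).Nodup := hnd.sublist (by simp)
  by_cases h1 : 1 ≤ s.T1.length ∧ ((xInB2 = true ∧ s.T1.length = s.p) ∨ s.p < s.T1.length)
  · obtain ⟨A, q, hT1⟩ := s.T1.eq_nil_or_concat'.resolve_left (List.ne_nil_of_length_pos h1.1)
    have hrep : arcReplace xInB2 s = { s with T1 := A, B1 := q :: s.B1 } := by
      rw [arcReplace, if_pos h1]; simp [hT1]
    have hΔ := arcPhiAt_demote_T1_sub s O (arcT s) hT1 hnd₁ (List.disjoint_of_nodup_append hnd₂)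
    rw [hrep]
    refine ⟨Or.inl ⟨q, by simp [hT1], by simp [hT1], rfl⟩, by rw [hΔ]; split_ifs <;> norm_num,
      fun q' hq' => ?_, fun q' hq' => (List.cons_ne_self q' s.B2 hq'.symm).elim⟩
    obtain rfl := (List.cons.inj hq').1
    exact ⟨fun h => by rw [hΔ, if_pos h], fun h => by rw [hΔ, if_neg h]⟩
  · obtain ⟨A, q, hT2⟩ := s.T2.eq_nil_or_concat'.resolve_left (hcall.resolve_left h1)
    have hrep : arcReplace xInB2 s = { s with T2 := A, B2 := q :: s.B2 } := by
      rw [arcReplace, if_neg h1]; simp [hT2]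
    have hΔ := arcPhiAt_demote_T2_sub s O (arcT s) hT2 (List.disjoint_of_nodup_append hnd₁) hnd₂
    rw [hrep]
    refine ⟨Or.inr ⟨q, by simp [hT2], by simp [hT2], rfl⟩, by rw [hΔ]; split_ifs <;> norm_num,
      fun q' hq' => (List.cons_ne_self q' s.B1 hq'.symm).elim, fun q' hq' => ?_⟩
    obtain rfl := (List.cons.inj hq').1
    exact ⟨fun h => by rw [hΔ, if_pos h], fun h => by rw [hΔ, if_neg h]⟩

/-- Lemma `lem:b`. A call to ARC's procedure REPLACE either
moves the element `LRU(T1)` from `T1` to (the MRU position of) `B1`, or moves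
`LRU(T2)` from `T2` to `B2`; in either case the resulting change `ΔΦ_R` of the
potential `Φ = p − [(b₁'−t) + 2(t₁'−t) + 3(b₂'−t) + 4(t₂'−t)]` (with `t` held
at its value at the moment of the call) satisfies `ΔΦ_R ≤ 1`. Specifically,
if the moved element lies in `T1'` (resp. `T2'`) the change is exactly `+1`,
and if it lies in `T1 − T1'` (resp. `T2 − T2'`) the potential is unchanged. -/
theorem arc_replace_lemma (N : ℕ) (s : ArcState) (xInB2 : Bool)
    (O : Finset Page) (hO : O.card ≤ N)
    (hN : 1 ≤ N) (hfull : s.T1.length + s.T2.length = N)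
    (hnd : (s.T1 ++ s.T2 ++ s.B1 ++ s.B2).Nodup)
    (hcall : (1 ≤ s.T1.length ∧
        ((xInB2 = true ∧ s.T1.length = s.p) ∨ s.p < s.T1.length)) ∨ s.T2 ≠ []) :
    ((∃ q, s.T1.getLast? = some q ∧ (arcReplace xInB2 s).T1 = s.T1.dropLast ∧
        (arcReplace xInB2 s).B1 = q :: s.B1) ∨
      (∃ q, s.T2.getLast? = some q ∧ (arcReplace xInB2 s).T2 = s.T2.dropLast ∧
        (arcReplace xInB2 s).B2 = q :: s.B2)) ∧
    arcPhiAt (arcReplace xInB2 s) O (arcT s) - arcPhiAt s O (arcT s) ≤ 1 ∧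
    (∀ q, (arcReplace xInB2 s).B1 = q :: s.B1 →
      (q ∈ s.T1.takeWhile (fun r => decide (r ∈ O)) →
        arcPhiAt (arcReplace xInB2 s) O (arcT s) - arcPhiAt s O (arcT s) = 1) ∧
      (q ∉ s.T1.takeWhile (fun r => decide (r ∈ O)) →
        arcPhiAt (arcReplace xInB2 s) O (arcT s) - arcPhiAt s O (arcT s) = 0)) ∧
    (∀ q, (arcReplace xInB2 s).B2 = q :: s.B2 →
      (q ∈ s.T2.takeWhile (fun r => decide (r ∈ O)) →
        arcPhiAt (arcReplace xInB2 s) O (arcT s) - arcPhiAt s O (arcT s) = 1) ∧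
      (q ∉ s.T2.takeWhile (fun r => decide (r ∈ O)) →
        arcPhiAt (arcReplace xInB2 s) O (arcT s) - arcPhiAt s O (arcT s) = 0)) :=
  arc_replace_lemma_general s xInB2 O hnd hcall
end

section
/- In the parallel execution of ARC and OPT, after phase P(0) (i.e., once ARC's cache is full), every eviction from ARC's directory is the result of an ARC miss and removes either LRU(L₁) or LRU(L₂); moreover the evicted page is never an element of L₁' or of L₂'. -/
theorem List.dropLast_append_getLast?_toList {α : Type*} (l : List α) :
    l.dropLast ++ l.getLast?.toList = l := by
  rcases l.eq_nil_or_concat with rfl | ⟨l', a, rfl⟩ <;> simp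

theorem List.getLast?_eq_of_mem_of_notMem_dropLast {α : Type*} {l : List α} {q : α}
    (hq : q ∈ l) (hq' : q ∉ l.dropLast) : l.getLast? = some q := by
  by_contra h
  exact hq' (List.mem_dropLast_of_mem_of_ne_getLast? hq (Ne.symm h))

theorem List.takeWhile_eq_self_of_getLast?_mem {α : Type*} {p : α → Bool} {l : List α} {q : α}
    (hnd : l.Nodup) (hlast : l.getLast? = some q) (hq : q ∈ l.takeWhile p) :
    l.takeWhile p = l := by
  have hsplit := List.takeWhile_append_dropWhile (p := p) (l := l)
  by_contra hne
  have hd : l.dropWhile p ≠ [] := fun hd => hne (by simpa [hd] using hsplit)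
  rw [← hsplit, List.getLast?_append_of_ne_nil _ hd] at hlast
  rw [← hsplit] at hnd
  exact List.disjoint_of_nodup_append hnd hq (List.mem_of_getLast? hlast)

theorem List.getLast_notMem_takeWhile_of_card_lt {α : Type*} [DecidableEq α] {l : List α}
    {q : α} {O : Finset α} (hnd : l.Nodup) (hlast : l.getLast? = some q)
    (hcard : O.card < l.length) : q ∉ l.takeWhile (fun r => decide (r ∈ O)) := by
  intro hq
  have hall := List.takeWhile_eq_self_iff.1 (List.takeWhile_eq_self_of_getLast?_mem hnd hlast hq)
  have hsub : l.toFinset ⊆ O := fun a ha => of_decide_eq_true (hall a (List.mem_toFinset.1 ha))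
  have := Finset.card_le_card hsub
  rw [List.toFinset_card_of_nodup hnd] at this
  omega

theorem List.getLast_notMem_takeWhile_of_card_le {α : Type*} [DecidableEq α] {l : List α}
    {x q : α} {O : Finset α} (hnd : (x :: l).Nodup) (hx : x ∈ O) (hlast : l.getLast? = some q)
    (hcard : O.card ≤ l.length) : q ∉ l.takeWhile (fun r => decide (r ∈ O)) := by
  intro hq
  refine List.getLast_notMem_takeWhile_of_card_lt (q := q) (O := O) hnd
    (by simp [List.getLast?_cons, hlast]) (by rw [List.length_cons]; omega) ?_
  rw [List.takeWhile_cons_of_pos (p := fun r => decide (r ∈ O)) (decide_eq_true hx)]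
  exact List.mem_cons_of_mem _ hq

def arcL1 (s : ArcState) : List Page := s.T1 ++ s.B1

def arcL2 (s : ArcState) : List Page := s.T2 ++ s.B2

theorem arcDir_perm (s : ArcState) : (arcDir s).Perm (arcL1 s ++ arcL2 s) := by
  simp only [arcDir, arcL1, arcL2, List.append_assoc, List.perm_append_left_iff]
  exact List.perm_append_comm_assoc _ _ _

theorem mem_arcDir {s : ArcState} {a : Page} : a ∈ arcDir s ↔ a ∈ arcL1 s ∨ a ∈ arcL2 s := by
  rw [(arcDir_perm s).mem_iff, List.mem_append]

theorem arcL1_arcReplace (b : Bool) (s : ArcState) : arcL1 (arcReplace b s) = arcL1 s := by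
  unfold arcReplace arcL1
  split
  · rw [← List.append_assoc, List.dropLast_append_getLast?_toList]
  · rfl

theorem arcL2_arcReplace (b : Bool) (s : ArcState) : arcL2 (arcReplace b s) = arcL2 s := by
  unfold arcReplace arcL2
  split
  · rfl
  · rw [← List.append_assoc, List.dropLast_append_getLast?_toList]

theorem B1_subset_B1_arcReplace (b : Bool) (s : ArcState) : s.B1 ⊆ (arcReplace b s).B1 := by
  unfold arcReplace
  split <;> simp

theorem B2_subset_B2_arcReplace (b : Bool) (s : ArcState) : s.B2 ⊆ (arcReplace b s).B2 := by
  unfold arcReplace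
  split <;> simp

theorem arcDir_arcReplace_perm (b : Bool) (s : ArcState) :
    (arcDir (arcReplace b s)).Perm (arcDir s) := by
  refine (arcDir_perm _).trans ?_
  rw [arcL1_arcReplace, arcL2_arcReplace]
  exact (arcDir_perm s).symm

theorem arcDir_promote_T_perm {s : ArcState} {x : Page} (hnd : (arcDir s).Nodup)
    (hx : x ∈ s.T1 ∨ x ∈ s.T2) :
    (arcDir { s with T1 := s.T1.erase x, T2 := x :: s.T2.erase x }).Perm (arcDir s) := by
  rw [List.perm_iff_count]
  intro a
  rcases eq_or_ne a x with rfl | hax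
  · have hone := List.count_eq_one_of_mem hnd (by simp only [arcDir, List.mem_append]; tauto)
    have hpos : 0 < s.T1.count a + s.T2.count a := by
      rcases hx with h | h <;> simp [List.count_pos_iff.2 h]
    simp only [arcDir, List.count_append, List.count_cons_self, List.count_erase_self] at hone ⊢
    omega
  · simp [arcDir, List.count_erase_of_ne hax, hax.symm]

theorem arcDir_promote_B1_perm {s : ArcState} {x : Page} (hx : x ∈ s.B1) :
    (arcDir { s with B1 := s.B1.erase x, T2 := x :: s.T2 }).Perm (arcDir s) := by
  rw [List.perm_iff_count]
  intro a
  rcases eq_or_ne a x with rfl | hax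
  · have hpos := List.count_pos_iff.2 hx
    simp only [arcDir, List.count_append, List.count_cons_self, List.count_erase_self]
    omega
  · simp [arcDir, List.count_erase_of_ne hax, hax.symm]

theorem arcDir_promote_B2_perm {s : ArcState} {x : Page} (hx : x ∈ s.B2) :
    (arcDir { s with B2 := s.B2.erase x, T2 := x :: s.T2 }).Perm (arcDir s) := by
  rw [List.perm_iff_count]
  intro a
  rcases eq_or_ne a x with rfl | hax
  · have hpos := List.count_pos_iff.2 hx
    simp only [arcDir, List.count_append, List.count_cons_self, List.count_erase_self]
    omega
  · simp [arcDir, List.count_erase_of_ne hax, hax.symm]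

theorem arcDir_arcStep_perm_of_mem {N : ℕ} {s : ArcState} {x : Page} (hnd : (arcDir s).Nodup)
    (hx : x ∈ arcDir s) : (arcDir (arcStep N s x)).Perm (arcDir s) := by
  by_cases hT : x ∈ s.T1 ∨ x ∈ s.T2
  · rw [arcStep, if_pos hT]
    exact arcDir_promote_T_perm hnd hT
  by_cases hB1 : x ∈ s.B1
  · rw [arcStep, if_neg hT, if_pos hB1]
    exact (arcDir_promote_B1_perm
      (B1_subset_B1_arcReplace false { s with p := min (s.p + 1) N } hB1)).trans
        (arcDir_arcReplace_perm _ _)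
  have hB2 : x ∈ s.B2 := by simp_all [arcDir]
  rw [arcStep, if_neg hT, if_neg hB1, if_pos hB2]
  exact (arcDir_promote_B2_perm (B2_subset_B2_arcReplace true { s with p := s.p - 1 } hB2)).trans
    (arcDir_arcReplace_perm _ _)

theorem arcL_arcStep_of_notMem {N : ℕ} {s : ArcState} {x : Page} (hx : x ∉ arcDir s) :
    (arcL1 (arcStep N s x) = x :: (arcL1 s).dropLast ∧ arcL2 (arcStep N s x) = arcL2 s ∧
      (arcL1 s).length = N) ∨
    (arcL1 (arcStep N s x) = x :: arcL1 s ∧ arcL2 (arcStep N s x) = (arcL2 s).dropLast ∧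
      (arcL1 s).length < N ∧ (arcL1 s).length + (arcL2 s).length = 2 * N) ∨
    (arcL1 (arcStep N s x) = x :: arcL1 s ∧ arcL2 (arcStep N s x) = arcL2 s) := by
  simp only [arcDir, List.mem_append, not_or] at hx
  obtain ⟨⟨⟨hT1, hT2⟩, hB1⟩, hB2⟩ := hx
  rw [arcStep, if_neg (by tauto), if_neg hB1, if_neg hB2]
  have hL1 : (arcL1 s).length = s.T1.length + s.B1.length := List.length_append
  split_ifs with hfull hT1N hdir hdir2
  · have hne : s.B1 ≠ [] := by intro h; simp only [h, List.length_nil] at hfull; omega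
    have h1 := arcL1_arcReplace false { s with B1 := s.B1.dropLast }
    have h2 := arcL2_arcReplace false { s with B1 := s.B1.dropLast }
    refine Or.inl ⟨?_, ?_, by omega⟩
    · simp only [arcL1] at h1 ⊢
      rw [List.cons_append, h1, List.dropLast_append_of_ne_nil hne]
    · exact h2
  · have hnil : s.B1 = [] := List.eq_nil_of_length_eq_zero (by omega)
    refine Or.inl ⟨?_, rfl, by omega⟩
    simp [arcL1, hnil]
  · have h1 := arcL1_arcReplace false { s with B2 := s.B2.dropLast }
    have h2 := arcL2_arcReplace false { s with B2 := s.B2.dropLast }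
    simp only [arcL1, arcL2] at h1 h2 ⊢
    rw [List.cons_append, h1, h2]
    by_cases hne : s.B2 = []
    · simp [hne]
    · refine Or.inr (Or.inl ⟨rfl, (List.dropLast_append_of_ne_nil hne).symm, ?_⟩)
      simp only [List.length_append]
      omega
  · refine Or.inr (Or.inr ⟨?_, arcL2_arcReplace false s⟩)
    rw [arcL1, List.cons_append, ← arcL1, arcL1_arcReplace]
  · exact Or.inr (Or.inr ⟨rfl, rfl⟩)

theorem arcDir_nodup_arcStep (N : ℕ) {s : ArcState} {x : Page} (hnd : (arcDir s).Nodup) :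
    (arcDir (arcStep N s x)).Nodup := by
  by_cases hx : x ∈ arcDir s
  · exact (arcDir_arcStep_perm_of_mem hnd hx).nodup_iff.2 hnd
  rw [(arcDir_perm s).nodup_iff] at hnd
  have hcons : ∀ l, l.Sublist (arcL1 s ++ arcL2 s) → (x :: l).Nodup := fun l hl =>
    List.nodup_cons.2 ⟨fun h => hx (mem_arcDir.2 (List.mem_append.1 (hl.subset h))), hnd.sublist hl⟩
  rw [(arcDir_perm _).nodup_iff]
  rcases arcL_arcStep_of_notMem (N := N) hx with ⟨h1, h2, -⟩ | ⟨h1, h2, -⟩ | ⟨h1, h2⟩ <;>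
    rw [h1, h2, List.cons_append] <;> apply hcons
  · exact (List.dropLast_sublist _).append_right _
  · exact (List.dropLast_sublist _).append_left _
  · exact List.Sublist.refl _

theorem arcDir_nodup_arcRun (N : ℕ) :
    ∀ (l : List Page) {s : ArcState}, (arcDir s).Nodup → (arcDir (arcRun N s l)).Nodup
  | [], _, h => h
  | _ :: xs, _, h => arcDir_nodup_arcRun N xs (arcDir_nodup_arcStep N h)

theorem arcDir_arcStep_evicts {N : ℕ} {s : ArcState} {x q : Page} {O : Finset Page}
    (hnd : (arcDir s).Nodup) (hx : x ∉ arcDir s) (hxO : x ∈ O) (hO : O.card ≤ N)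
    (hq : q ∈ arcDir s) (hq' : q ∉ arcDir (arcStep N s x)) :
    ((arcL1 s).getLast? = some q ∨ (arcL2 s).getLast? = some q) ∧
    q ∉ (arcL1 s).takeWhile (fun r => decide (r ∈ O)) ∧
    q ∉ (arcL2 s).takeWhile (fun r => decide (r ∈ O)) := by
  rw [(arcDir_perm s).nodup_iff, List.nodup_append] at hnd
  obtain ⟨hnd1, hnd2, hdisj⟩ := hnd
  rw [mem_arcDir] at hq
  rw [mem_arcDir, not_or] at hq'
  have hxL1 : x ∉ arcL1 s := fun h => hx (mem_arcDir.2 (Or.inl h))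
  rcases arcL_arcStep_of_notMem (N := N) hx with
    ⟨h1, h2, hlen⟩ | ⟨h1, h2, hlen, hdir⟩ | ⟨h1, h2⟩ <;> rw [h1, h2] at hq'
  · have hqL1 : q ∈ arcL1 s := hq.resolve_right hq'.2
    have hlast : (arcL1 s).getLast? = some q :=
      List.getLast?_eq_of_mem_of_notMem_dropLast hqL1 (fun h => hq'.1 (List.mem_cons_of_mem _ h))
    refine ⟨Or.inl hlast, ?_, fun hqt => hdisj q hqL1 q (List.takeWhile_subset _ hqt) rfl⟩
    exact List.getLast_notMem_takeWhile_of_card_le (List.nodup_cons.2 ⟨hxL1, hnd1⟩) hxO hlast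
      (by omega)
  · have hqL2 : q ∈ arcL2 s := hq.resolve_left (fun h => hq'.1 (List.mem_cons_of_mem _ h))
    have hlast : (arcL2 s).getLast? = some q :=
      List.getLast?_eq_of_mem_of_notMem_dropLast hqL2 hq'.2
    refine ⟨Or.inr hlast, fun hqt => hdisj q (List.takeWhile_subset _ hqt) q hqL2 rfl, ?_⟩
    exact List.getLast_notMem_takeWhile_of_card_lt hnd2 hlast (by omega)
  · exact absurd hq (by simp_all)

theorem arc_eviction_lemma_general (N : ℕ) (σ : List Page) (C : ℕ → Finset Page)
    (hC : OptExec N σ C)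
    (j : ℕ) (hj : j < σ.length)
    (s : ArcState) (hs : s = arcRun N ArcState.init (σ.take j))
    (q : Page) (hq : q ∈ arcDir s) (hq' : q ∉ arcDir (arcStep N s (σ.getD j 0))) :
    (σ.getD j 0 ∉ s.T1 ∧ σ.getD j 0 ∉ s.T2) ∧
    ((s.T1 ++ s.B1).getLast? = some q ∨ (s.T2 ++ s.B2).getLast? = some q) ∧
    q ∉ (s.T1 ++ s.B1).takeWhile (fun r => decide (r ∈ C (j + 1))) ∧
    q ∉ (s.T2 ++ s.B2).takeWhile (fun r => decide (r ∈ C (j + 1))) := by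
  obtain ⟨-, hcard, hserve⟩ := hC
  have hnd : (arcDir s).Nodup := hs ▸ arcDir_nodup_arcRun N _ (by simp [ArcState.init, arcDir])
  have hmiss : σ.getD j 0 ∉ arcDir s := fun hx =>
    hq' ((arcDir_arcStep_perm_of_mem hnd hx).mem_iff.2 hq)
  exact ⟨by simp_all [arcDir],
    arcDir_arcStep_evicts hnd hmiss (hserve j hj).1 (hcard (j + 1)) hq hq'⟩

/-- Lemma `lem:c`. In the parallel execution of ARC and OPT,
after phase `P(0)` (i.e. once ARC has incurred at least `N` faults), every
page `q` evicted from ARC's directory while serving `σ_j` is evicted as the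
result of an ARC miss and is either `LRU(L1)` or `LRU(L2)`; moreover the
evicted page belongs neither to `L1' = TOP(L1)` nor to `L2' = TOP(L2)`. -/
theorem arc_eviction_lemma (N : ℕ) (σ : List Page) (C : ℕ → Finset Page)
    (hC : OptExec N σ C) (hCopt : optFaults σ C = optCost N σ)
    (j : ℕ) (hj : j < σ.length)
    (hphase : N ≤ arcCost N ArcState.init (σ.take j))
    (s : ArcState) (hs : s = arcRun N ArcState.init (σ.take j))
    (q : Page) (hq : q ∈ arcDir s) (hq' : q ∉ arcDir (arcStep N s (σ.getD j 0))) :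
    (σ.getD j 0 ∉ s.T1 ∧ σ.getD j 0 ∉ s.T2) ∧
    ((s.T1 ++ s.B1).getLast? = some q ∨ (s.T2 ++ s.B2).getLast? = some q) ∧
    q ∉ (s.T1 ++ s.B1).takeWhile (fun r => decide (r ∈ C (j + 1))) ∧
    q ∉ (s.T2 ++ s.B2).takeWhile (fun r => decide (r ∈ C (j + 1))) :=
  arc_eviction_lemma_general N σ C hC j hj s hs q hq hq'
end

section
/- In the parallel execution of ARC and OPT, after phase P(0) (i.e., once ARC's cache is full with t₁ + t₂ = N): on an ARC miss, T₁ = T₁' and T₂ = T₂' cannot hold simultaneously; consequently, if T₁ = T₁' then the page demoted from T₂ to B₂ by REPLACE is not in T₂', and symmetrically, if T₂ = T₂' then the page demoted from T₁ to B₁ by REPLACE is not in T₁'. -/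
/-!
Every ARC miss adds a page to `T₁ ∪ T₂` until the cache holds `N` pages, because REPLACE always
finds a page to evict: this rests on the invariants `t ≤ N`, `|T₁| + |B₁| ≤ N`, `p ≤ N`, and
`t = N` as soon as the history lists are nonempty. So after `N` misses ARC's cache is full.
On a further miss the requested page is absent from ARC's cache but present in OPT's cache
after the request, so OPT's `N` slots cannot also hold all `N` pages of `T₁ ∪ T₂`. If
`T₁ = TOP(T₁)`, then `TOP(T₂)` is a proper prefix of the duplicate-free list `T₂`, hence misses
its last page; symmetrically for `T₁`.
-/

namespace List

variable {α : Type*}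

theorem length_dropLast_add_length_getLast?_toList (l : List α) :
    l.dropLast.length + l.getLast?.toList.length = l.length := by
  rcases l.eq_nil_or_concat with rfl | ⟨L, b, rfl⟩ <;> simp

theorem nodup_cons_of_sublist {x : α} {l' l : List α} (hs : l'.Sublist l) (hl : l.Nodup)
    (hx : x ∉ l) : (x :: l').Nodup :=
  nodup_cons.2 ⟨fun h => hx (hs.subset h), hs.nodup hl⟩

theorem nodup_append_cons_of_sublist {x : α} {l₁ l₂ l : List α} (hs : (l₁ ++ l₂).Sublist l)
    (hl : l.Nodup) (hx : x ∉ l) : (l₁ ++ x :: l₂).Nodup :=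
  perm_middle.nodup_iff.2 (nodup_cons_of_sublist hs hl hx)

theorem getLast_not_mem_takeWhile {p : α → Bool} {l : List α} (hl : l.Nodup)
    (h : l.takeWhile p ≠ l) {q : α} (hq : l.getLast? = some q) : q ∉ l.takeWhile p := by
  have hsplit : l.takeWhile p ++ l.dropWhile p = l := takeWhile_append_dropWhile
  have hdrop : l.dropWhile p ≠ [] := by
    intro hnil
    rw [hnil, append_nil] at hsplit
    exact h hsplit
  have hq_drop : q ∈ l.dropWhile p := by
    rw [← hsplit, getLast?_append, getLast?_eq_some_getLast hdrop] at hq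
    cases hq
    exact getLast_mem hdrop
  rw [← hsplit, nodup_append] at hl
  exact fun hq_take => hl.2.2 q hq_take q hq_drop rfl

theorem length_lt_card_of_forall_mem [DecidableEq α] {x : α} {l : List α} {O : Finset α}
    (hl : l.Nodup) (hx : x ∉ l) (hxO : x ∈ O) (hlO : ∀ y ∈ l, y ∈ O) : l.length < O.card := by
  have hsub : (x :: l).toFinset ⊆ O := by
    intro y hy
    rcases mem_cons.1 (mem_toFinset.1 hy) with rfl | hy
    exacts [hxO, hlO y hy]
  have hcard := Finset.card_le_card hsub
  rw [toFinset_card_of_nodup (nodup_cons.2 ⟨hx, hl⟩), length_cons] at hcard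
  exact hcard

end List

section Replace

variable (b : Bool) (s : ArcState)

@[simp]
theorem arcReplace_p : (arcReplace b s).p = s.p := by
  unfold arcReplace; split_ifs <;> rfl

theorem arcReplace_T1_length_add_B1_length :
    (arcReplace b s).T1.length + (arcReplace b s).B1.length = s.T1.length + s.B1.length := by
  unfold arcReplace; split_ifs
  · have := s.T1.length_dropLast_add_length_getLast?_toList
    simp only [List.length_append]; omega
  · rfl

theorem arcReplace_T_sublist :
    ((arcReplace b s).T1 ++ (arcReplace b s).T2).Sublist (s.T1 ++ s.T2) := by
  unfold arcReplace; split_ifs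
  · exact (List.dropLast_sublist _).append (List.Sublist.refl _)
  · exact (List.Sublist.refl _).append (List.dropLast_sublist _)

theorem B1_subset_arcReplace_B1 : s.B1 ⊆ (arcReplace b s).B1 := by
  unfold arcReplace; split_ifs
  · exact List.subset_append_right _ _
  · exact List.Subset.refl _

-- REPLACE evicts a page unless it picks an empty `T2`, which the hypothesis rules out.
theorem arcT_arcReplace_add_one (h : s.T1.length < arcT s ∨ s.p < arcT s) :
    arcT (arcReplace b s) + 1 = arcT s := by
  unfold arcReplace arcT at *; split_ifs <;> simp only [List.length_dropLast] <;> omega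

end Replace

structure ArcInv (N : ℕ) (s : ArcState) : Prop where
  nodup : (s.T1 ++ s.T2).Nodup
  T1_length_add_B1_length_le : s.T1.length + s.B1.length ≤ N
  arcT_le : arcT s ≤ N
  arcT_eq_of_history : 0 < s.B1.length + s.B2.length → arcT s = N
  p_le : s.p ≤ N

namespace ArcInv

variable {N : ℕ} {s : ArcState} {x : Page}

theorem init (N : ℕ) : ArcInv N ArcState.init :=
  ⟨List.nodup_nil, Nat.zero_le N, Nat.zero_le N, fun h => absurd h (lt_irrefl 0), Nat.zero_le N⟩

theorem of_arcT_eq (hnd : (s.T1 ++ s.T2).Nodup) (h1 : s.T1.length + s.B1.length ≤ N)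
    (ht : arcT s = N) (hp : s.p ≤ N) : ArcInv N s :=
  ⟨hnd, h1, ht.le, fun _ => ht, hp⟩

theorem arcStep_of_hit (h : ArcInv N s) (hx : x ∈ s.T1 ∨ x ∈ s.T2) :
    ArcInv N (arcStep N s x) ∧ arcT (arcStep N s x) = arcT s := by
  have hperm : (s.T1.erase x ++ x :: s.T2.erase x).Perm (s.T1 ++ s.T2) := by
    rcases hx with hx | hx
    · have hx2 : x ∉ s.T2 := fun hx2 => (List.nodup_append.1 h.nodup).2.2 x hx x hx2 rfl
      rw [List.erase_of_not_mem hx2]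
      exact List.perm_middle.trans ((List.perm_cons_erase hx).symm.append_right _)
    · have hx1 : x ∉ s.T1 := fun hx1 => (List.nodup_append.1 h.nodup).2.2 x hx1 x hx rfl
      rw [List.erase_of_not_mem hx1]
      exact (List.perm_cons_erase hx).symm.append_left _
  have hlen := hperm.length_eq
  have herase : (s.T1.erase x).length ≤ s.T1.length := List.length_erase_le
  have hL1 := h.T1_length_add_B1_length_le
  have ht := h.arcT_le
  have hhist := h.arcT_eq_of_history
  rw [arcStep, if_pos hx]
  unfold arcT at *
  simp only [List.length_append, List.length_cons] at hlen
  refine ⟨⟨hperm.nodup_iff.2 h.nodup, ?_, ?_, ?_, h.p_le⟩, ?_⟩ <;>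
    simp only [arcT, List.length_cons] <;> omega

theorem arcStep_of_mem_B1 (h : ArcInv N s) (hx : ¬(x ∈ s.T1 ∨ x ∈ s.T2)) (hb : x ∈ s.B1) :
    ArcInv N (arcStep N s x) ∧ arcT (arcStep N s x) = min N (arcT s + 1) := by
  have hfull : arcT s = N := h.arcT_eq_of_history (by have := List.length_pos_of_mem hb; omega)
  have hT1 : s.T1.length < arcT s := by
    have := h.T1_length_add_B1_length_le
    have := List.length_pos_of_mem hb
    omega
  have hu := arcT_arcReplace_add_one false { s with p := min (s.p + 1) N } (Or.inl hT1)
  have hu1 := arcReplace_T1_length_add_B1_length false { s with p := min (s.p + 1) N }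
  have herase :=
    List.length_erase_of_mem (B1_subset_arcReplace_B1 false { s with p := min (s.p + 1) N } hb)
  have hup := arcReplace_p false { s with p := min (s.p + 1) N }
  have hsub := arcReplace_T_sublist false { s with p := min (s.p + 1) N }
  have hL1 := h.T1_length_add_B1_length_le
  rw [arcStep, if_neg hx, if_pos hb]
  generalize arcReplace false { s with p := min (s.p + 1) N } = u at *
  unfold arcT at *
  dsimp only at *
  refine ⟨of_arcT_eq ?_ ?_ ?_ ?_, ?_⟩
  · exact List.nodup_append_cons_of_sublist hsub h.nodup (by simpa using hx)
  all_goals simp only [arcT, List.length_cons]; omega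

theorem arcStep_of_mem_B2 (hN : 1 ≤ N) (h : ArcInv N s) (hx : ¬(x ∈ s.T1 ∨ x ∈ s.T2))
    (hb1 : x ∉ s.B1) (hb2 : x ∈ s.B2) :
    ArcInv N (arcStep N s x) ∧ arcT (arcStep N s x) = min N (arcT s + 1) := by
  have hfull : arcT s = N := h.arcT_eq_of_history (by have := List.length_pos_of_mem hb2; omega)
  have hp : s.p - 1 < arcT s := by have := h.p_le; omega
  have hu := arcT_arcReplace_add_one true { s with p := s.p - 1 } (Or.inr hp)
  have hu1 := arcReplace_T1_length_add_B1_length true { s with p := s.p - 1 }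
  have hup := arcReplace_p true { s with p := s.p - 1 }
  have hsub := arcReplace_T_sublist true { s with p := s.p - 1 }
  have hL1 := h.T1_length_add_B1_length_le
  have hpN := h.p_le
  rw [arcStep, if_neg hx, if_neg hb1, if_pos hb2]
  generalize arcReplace true { s with p := s.p - 1 } = u at *
  unfold arcT at *
  dsimp only at *
  refine ⟨of_arcT_eq ?_ ?_ ?_ ?_, ?_⟩
  · exact List.nodup_append_cons_of_sublist hsub h.nodup (by simpa using hx)
  all_goals simp only [arcT, List.length_cons]; omega

theorem arcStep_of_L1_full_of_T1_length_lt (h : ArcInv N s) (hx : ¬(x ∈ s.T1 ∨ x ∈ s.T2))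
    (hb1 : x ∉ s.B1) (hb2 : x ∉ s.B2) (hL1 : s.T1.length + s.B1.length = N)
    (hT1 : s.T1.length < N) :
    ArcInv N (arcStep N s x) ∧ arcT (arcStep N s x) = min N (arcT s + 1) := by
  have hfull : arcT s = N := h.arcT_eq_of_history (by omega)
  have hu := arcT_arcReplace_add_one false { s with B1 := s.B1.dropLast }
    (Or.inl (show s.T1.length < arcT s by omega))
  have hu1 := arcReplace_T1_length_add_B1_length false { s with B1 := s.B1.dropLast }
  have hup := arcReplace_p false { s with B1 := s.B1.dropLast }
  have hsub := arcReplace_T_sublist false { s with B1 := s.B1.dropLast }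
  have hpN := h.p_le
  rw [arcStep, if_neg hx, if_neg hb1, if_neg hb2, if_pos hL1, if_pos hT1]
  generalize arcReplace false { s with B1 := s.B1.dropLast } = u at *
  unfold arcT at *
  dsimp only at *
  refine ⟨of_arcT_eq ?_ ?_ ?_ ?_, ?_⟩
  · exact List.nodup_cons_of_sublist hsub h.nodup (by simpa using hx)
  all_goals simp only [arcT, List.length_cons, List.length_dropLast] at *; omega

theorem arcStep_of_T1_length_eq (hN : 1 ≤ N) (h : ArcInv N s) (hx : ¬(x ∈ s.T1 ∨ x ∈ s.T2))
    (hb1 : x ∉ s.B1) (hb2 : x ∉ s.B2) (hL1 : s.T1.length + s.B1.length = N)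
    (hT1 : ¬s.T1.length < N) :
    ArcInv N (arcStep N s x) ∧ arcT (arcStep N s x) = min N (arcT s + 1) := by
  have ht := h.arcT_le
  have hpN := h.p_le
  rw [arcStep, if_neg hx, if_neg hb1, if_neg hb2, if_pos hL1, if_neg hT1]
  unfold arcT at *
  dsimp only
  refine ⟨of_arcT_eq ?_ ?_ ?_ hpN, ?_⟩
  · exact List.nodup_cons_of_sublist ((List.dropLast_sublist _).append (List.Sublist.refl _))
      h.nodup (by simpa using hx)
  all_goals simp only [arcT, List.length_cons, List.length_dropLast]; omega

theorem arcStep_of_L1_lt_of_le_dir (h : ArcInv N s) (hx : ¬(x ∈ s.T1 ∨ x ∈ s.T2))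
    (hb1 : x ∉ s.B1) (hb2 : x ∉ s.B2) (hL1 : ¬s.T1.length + s.B1.length = N)
    (hdir : s.T1.length + s.B1.length < N ∧
      N ≤ s.T1.length + s.T2.length + s.B1.length + s.B2.length) :
    ArcInv N (arcStep N s x) ∧ arcT (arcStep N s x) = min N (arcT s + 1) := by
  have hfull : arcT s = N := by
    have := h.arcT_le
    have := h.arcT_eq_of_history
    unfold arcT at *
    omega
  have hpN := h.p_le
  have hnd := h.nodup
  rw [arcStep, if_neg hx, if_neg hb1, if_neg hb2, if_neg hL1, if_pos hdir]
  dsimp only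
  -- REPLACE acts on `s`, possibly after dropping `LRU(B2)`, which changes none of the data it reads
  have key : ∀ v : ArcState, v.T1 = s.T1 → v.T2 = s.T2 → v.B1 = s.B1 → v.p = s.p →
      ArcInv N { arcReplace false v with T1 := x :: (arcReplace false v).T1 } ∧
        arcT { arcReplace false v with T1 := x :: (arcReplace false v).T1 } =
          min N (arcT s + 1) := by
    rintro v hvT1 hvT2 hvB1 hvp
    have hu :=
      arcT_arcReplace_add_one false v (Or.inl (by unfold arcT at *; rw [hvT1, hvT2]; omega))
    have hu1 := arcReplace_T1_length_add_B1_length false v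
    have hup := arcReplace_p false v
    have hsub := arcReplace_T_sublist false v
    rw [hvT1, hvT2] at hsub
    rw [hvT1, hvB1] at hu1
    rw [hvp] at hup
    generalize arcReplace false v = u at *
    unfold arcT at *
    rw [hvT1, hvT2] at hu
    refine ⟨of_arcT_eq ?_ ?_ ?_ ?_, ?_⟩
    · exact List.nodup_cons_of_sublist hsub hnd (by simpa using hx)
    all_goals simp only [arcT, List.length_cons]; omega
  split_ifs <;> exact key _ rfl rfl rfl rfl

theorem arcStep_of_dir_lt (h : ArcInv N s) (hx : ¬(x ∈ s.T1 ∨ x ∈ s.T2))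
    (hb1 : x ∉ s.B1) (hb2 : x ∉ s.B2) (hL1 : ¬s.T1.length + s.B1.length = N)
    (hdir : ¬(s.T1.length + s.B1.length < N ∧
      N ≤ s.T1.length + s.T2.length + s.B1.length + s.B2.length)) :
    ArcInv N (arcStep N s x) ∧ arcT (arcStep N s x) = min N (arcT s + 1) := by
  have hL1' := h.T1_length_add_B1_length_le
  have ht := h.arcT_le
  have hhist := h.arcT_eq_of_history
  have hpN := h.p_le
  rw [arcStep, if_neg hx, if_neg hb1, if_neg hb2, if_neg hL1, if_neg hdir]
  unfold arcT at *
  dsimp only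
  refine ⟨⟨?_, ?_, ?_, ?_, hpN⟩, ?_⟩
  · exact List.nodup_cons_of_sublist (List.Sublist.refl _) h.nodup (by simpa using hx)
  all_goals simp only [arcT, List.length_cons]; omega

end ArcInv

theorem ArcInv.arcStep {N : ℕ} {s : ArcState} (hN : 1 ≤ N) (h : ArcInv N s) (x : Page) :
    ArcInv N (arcStep N s x) ∧
      arcT (arcStep N s x) = min N (arcT s + if x ∈ s.T1 ∨ x ∈ s.T2 then 0 else 1) := by
  by_cases hx : x ∈ s.T1 ∨ x ∈ s.T2
  · rw [if_pos hx, Nat.add_zero, min_eq_right h.arcT_le]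
    exact h.arcStep_of_hit hx
  rw [if_neg hx]
  by_cases hb1 : x ∈ s.B1
  · exact h.arcStep_of_mem_B1 hx hb1
  by_cases hb2 : x ∈ s.B2
  · exact h.arcStep_of_mem_B2 hN hx hb1 hb2
  by_cases hL1 : s.T1.length + s.B1.length = N
  · by_cases hT1 : s.T1.length < N
    · exact h.arcStep_of_L1_full_of_T1_length_lt hx hb1 hb2 hL1 hT1
    · exact h.arcStep_of_T1_length_eq hN hx hb1 hb2 hL1 hT1
  by_cases hdir : s.T1.length + s.B1.length < N ∧
      N ≤ s.T1.length + s.T2.length + s.B1.length + s.B2.length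
  · exact h.arcStep_of_L1_lt_of_le_dir hx hb1 hb2 hL1 hdir
  · exact h.arcStep_of_dir_lt hx hb1 hb2 hL1 hdir

theorem ArcInv.arcRun {N : ℕ} (hN : 1 ≤ N) (l : List Page) {s : ArcState} (h : ArcInv N s) :
    ArcInv N (arcRun N s l) ∧ arcT (arcRun N s l) = min N (arcT s + arcCost N s l) := by
  induction l generalizing s with
  | nil => exact ⟨h, by rw [_root_.arcRun, arcCost, Nat.add_zero, min_eq_right h.arcT_le]⟩
  | cons x l ih =>
    obtain ⟨hstep, hgrow⟩ := h.arcStep hN x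
    obtain ⟨hrun, hfill⟩ := ih hstep
    refine ⟨hrun, ?_⟩
    rw [_root_.arcRun, arcCost, hfill, hgrow]
    omega

theorem arc_lemma_d_general (N : ℕ) (σ : List Page) (C : ℕ → Finset Page)
    (hC : OptExec N σ C)
    (j : ℕ) (hj : j < σ.length)
    (hphase : N ≤ arcCost N ArcState.init (σ.take j))
    (s : ArcState) (hs : s = arcRun N ArcState.init (σ.take j))
    (hmiss : σ.getD j 0 ∉ s.T1 ∧ σ.getD j 0 ∉ s.T2) :
    ¬(s.T1.takeWhile (fun r => decide (r ∈ C (j + 1))) = s.T1 ∧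
        s.T2.takeWhile (fun r => decide (r ∈ C (j + 1))) = s.T2) ∧
    (s.T1.takeWhile (fun r => decide (r ∈ C (j + 1))) = s.T1 →
      ∀ q, s.T2.getLast? = some q →
        q ∉ s.T2.takeWhile (fun r => decide (r ∈ C (j + 1)))) ∧
    (s.T2.takeWhile (fun r => decide (r ∈ C (j + 1))) = s.T2 →
      ∀ q, s.T1.getLast? = some q →
        q ∉ s.T1.takeWhile (fun r => decide (r ∈ C (j + 1)))) := by
  obtain ⟨-, hcard, hreq⟩ := hC
  have hxC : σ.getD j 0 ∈ C (j + 1) := (hreq j hj).1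
  have hN : 1 ≤ N := (Finset.card_pos.2 ⟨_, hxC⟩).trans_le (hcard _)
  obtain ⟨hinv, hfill⟩ := (ArcInv.init N).arcRun hN (σ.take j)
  rw [← hs] at hinv hfill
  have hfull : arcT s = N := by
    rw [hfill]
    exact min_eq_left (by simpa [arcT, ArcState.init] using hphase)
  have hnot_both : ¬(s.T1.takeWhile (fun r => decide (r ∈ C (j + 1))) = s.T1 ∧
      s.T2.takeWhile (fun r => decide (r ∈ C (j + 1))) = s.T2) := by
    rintro ⟨h1, h2⟩
    rw [List.takeWhile_eq_self_iff] at h1 h2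
    have hlt := List.length_lt_card_of_forall_mem hinv.nodup
      (by simpa only [List.mem_append, not_or] using hmiss) hxC fun y hy =>
        (List.mem_append.1 hy).elim (fun hy => of_decide_eq_true (h1 y hy))
          (fun hy => of_decide_eq_true (h2 y hy))
    have := hcard (j + 1)
    rw [List.length_append] at hlt
    unfold arcT at hfull
    omega
  have hT := List.nodup_append.1 hinv.nodup
  exact ⟨hnot_both,
    fun h1 _ hq => List.getLast_not_mem_takeWhile hT.2.1 (fun h2 => hnot_both ⟨h1, h2⟩) hq,
    fun h2 _ hq => List.getLast_not_mem_takeWhile hT.1 (fun h1 => hnot_both ⟨h1, h2⟩) hq⟩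

/-- Lemma `lem:d`. In the parallel execution of ARC and OPT,
after phase `P(0)` (once ARC has incurred at least `N` faults, so its cache is
full), on an ARC miss `T1 = T1'` and `T2 = T2'` cannot hold simultaneously;
consequently, if `T1 = T1'` then the page `LRU(T2)` demoted from `T2` to `B2`
by REPLACE is not in `T2'`, and symmetrically, if `T2 = T2'` then the page
`LRU(T1)` demoted from `T1` to `B1` by REPLACE is not in `T1'` (primed
quantities w.r.t. OPT's cache `C (j+1)`). -/
theorem arc_lemma_d (N : ℕ) (σ : List Page) (C : ℕ → Finset Page)
    (hC : OptExec N σ C) (hCopt : optFaults σ C = optCost N σ)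
    (j : ℕ) (hj : j < σ.length)
    (hphase : N ≤ arcCost N ArcState.init (σ.take j))
    (s : ArcState) (hs : s = arcRun N ArcState.init (σ.take j))
    (hmiss : σ.getD j 0 ∉ s.T1 ∧ σ.getD j 0 ∉ s.T2) :
    ¬(s.T1.takeWhile (fun r => decide (r ∈ C (j + 1))) = s.T1 ∧
        s.T2.takeWhile (fun r => decide (r ∈ C (j + 1))) = s.T2) ∧
    (s.T1.takeWhile (fun r => decide (r ∈ C (j + 1))) = s.T1 →
      ∀ q, s.T2.getLast? = some q →
        q ∉ s.T2.takeWhile (fun r => decide (r ∈ C (j + 1)))) ∧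
    (s.T2.takeWhile (fun r => decide (r ∈ C (j + 1))) = s.T2 →
      ∀ q, s.T1.getLast? = some q →
        q ∉ s.T1.takeWhile (fun r => decide (r ∈ C (j + 1)))) :=
  arc_lemma_d_general N σ C hC j hj hphase s hs hmiss
end

section
/- In the parallel execution of ARC and OPT, after phase P(0), when ARC serves a request on which it misses and the requested page is in B₁ (so p is updated to min(p+1, N), REPLACE is called, and the page is moved to MRU(T₂)), the change in the potential Φ = p − [(b₁'−t) + 2(t₁'−t) + 3(b₂'−t) + 4(t₂'−t)] satisfies ΔΦ ≤ −1; more precisely, ΔΦ ≤ −1 if the page is in B₁' and ΔΦ ≤ −2 if the page is in B₁ − B₁'. -/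
/-!
Write `L₁ = T₁ · B₁`, `L₂ = T₂ · B₂` and `top X = |TOP(X)|`. Since `Tᵢ` and `Bᵢ` are disjoint,
`b₁' + t₁' = top L₁` and `b₂' + t₂' = top L₂`, so `Φ = p + 10 t - (top L₁ + t₁' + 3 top L₂ + t₂')`.
On a hit of `x` in `B₁`, whichever list REPLACE shortens, `L₁` loses `x`, `L₂` becomes `x · L₂`,
`t` is unchanged and `p` grows by at most one. As `x` is in OPT's cache, `top L₂` grows by one,
`top L₁` drops by at most one (and only if `x ∈ TOP(L₁)`), and `t₁' + t₂'` does not drop: REPLACE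
removes at most one page from `TOP(T₁)` or `TOP(T₂)` while `x` enters `TOP(T₂)`. Hence
`ΔΦ ≤ 1 - 3 + [x ∈ TOP(L₁)]`.

That `t` is unchanged needs an invariant of ARC: once `B₁` is nonempty the cache is full and
`|L₁| ≤ N`, so `T₂` is nonempty and REPLACE really frees a page.
-/

namespace List

variable {α : Type*}

theorem dropLast_append_getLast?_toList_s12 (l : List α) : l.dropLast ++ l.getLast?.toList = l := by
  rw [dropLast_eq_take, take_append_getLast?]

theorem length_takeWhile_le_dropLast (p : α → Bool) (l : List α) :
    (l.takeWhile p).length ≤ (l.dropLast.takeWhile p).length + 1 := by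
  rw [dropLast_eq_take, ← take_takeWhile, length_take]
  have := (takeWhile_sublist p (l := l)).length_le
  omega

theorem length_takeWhile_le_erase [DecidableEq α] {p : α → Bool} {x : α} (hx : p x) :
    ∀ l : List α, (l.takeWhile p).length ≤
      ((l.erase x).takeWhile p).length + if x ∈ l.takeWhile p then 1 else 0
  | [] => by simp
  | a :: l => by
    by_cases ha : p a
    · by_cases hax : a = x
      · subst hax; simp [ha]
      · have ih := length_takeWhile_le_erase hx l
        rw [erase_cons_tail (by simpa using hax)]
        simp only [takeWhile_cons_of_pos ha, length_cons, mem_cons, Ne.symm hax, false_or]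
        omega
    · have hax : a ≠ x := fun h => ha (h ▸ hx)
      rw [erase_cons_tail (by simpa using hax)]
      simp [ha]

theorem length_filter_takeWhile_append_add [DecidableEq α] (p : α → Bool) {l₁ l₂ : List α}
    (h : ∀ a ∈ l₁, a ∉ l₂) :
    (((l₁ ++ l₂).takeWhile p).filter (fun q => decide (q ∈ l₂))).length
      + (l₁.takeWhile p).length = ((l₁ ++ l₂).takeWhile p).length := by
  rw [takeWhile_append]
  split_ifs with hall
  · rw [filter_append, filter_eq_nil_iff.mpr (by simpa using h),
      filter_eq_self.mpr fun a ha => by simpa using (takeWhile_sublist p).subset ha]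
    simp [hall, Nat.add_comm]
  · rw [filter_eq_nil_iff.mpr fun a ha => by simpa using h a ((takeWhile_sublist p).subset ha)]
    simp

theorem perm_erase_append_cons [DecidableEq α] {a : α} {l₁ : List α} (h : a ∈ l₁)
    (l₂ : List α) : (l₁.erase a ++ a :: l₂).Perm (l₁ ++ l₂) :=
  perm_middle.trans ((perm_cons_erase h).symm.append_right l₂)

end List

namespace ArcState

variable {N : ℕ} {s n : ArcState} {x : Page} {O : Finset Page}

def L1 (s : ArcState) : List Page := s.T1 ++ s.B1

def L2 (s : ArcState) : List Page := s.T2 ++ s.B2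

theorem length_L1 (s : ArcState) : s.L1.length = s.T1.length + s.B1.length := List.length_append

theorem length_L2 (s : ArcState) : s.L2.length = s.T2.length + s.B2.length := List.length_append

theorem arcDir_perm (s : ArcState) : (arcDir s).Perm (s.L1 ++ s.L2) := by
  rw [List.perm_iff_count]
  intro a
  simp only [arcDir, L1, L2, List.count_append]
  omega

@[simp] theorem arcReplace_p (b : Bool) (s : ArcState) : (arcReplace b s).p = s.p := by
  unfold arcReplace; split_ifs <;> rfl

@[simp] theorem arcReplace_L1 (b : Bool) (s : ArcState) : (arcReplace b s).L1 = s.L1 := by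
  unfold arcReplace; split_ifs
  · simp only [L1, ← List.append_assoc, List.dropLast_append_getLast?_toList_s12]
  · rfl

@[simp] theorem arcReplace_L2 (b : Bool) (s : ArcState) : (arcReplace b s).L2 = s.L2 := by
  unfold arcReplace; split_ifs
  · rfl
  · simp only [L2, ← List.append_assoc, List.dropLast_append_getLast?_toList_s12]

theorem length_L1_arcReplace (b : Bool) (s : ArcState) :
    (arcReplace b s).T1.length + (arcReplace b s).B1.length = s.T1.length + s.B1.length := by
  simpa only [length_L1] using congrArg List.length (arcReplace_L1 b s)

theorem arcReplace_T1_sublist (b : Bool) (s : ArcState) : (arcReplace b s).T1.Sublist s.T1 := by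
  unfold arcReplace; split_ifs
  · exact List.dropLast_sublist _
  · exact List.Sublist.refl _

theorem arcReplace_T2_sublist (b : Bool) (s : ArcState) : (arcReplace b s).T2.Sublist s.T2 := by
  unfold arcReplace; split_ifs
  · exact List.Sublist.refl _
  · exact List.dropLast_sublist _

/-- The hypothesis says that REPLACE does not try to demote a page from an empty `T2`. -/
theorem length_arcReplace (b : Bool) (s : ArcState)
    (h : s.T2 = [] → 1 ≤ s.T1.length ∧ ((b = true ∧ s.T1.length = s.p) ∨ s.p < s.T1.length)) :
    (arcReplace b s).T1.length + (arcReplace b s).T2.length + 1 = s.T1.length + s.T2.length := by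
  unfold arcReplace; split_ifs with hc
  · simp only [List.length_dropLast]; omega
  · have := List.length_pos_iff.mpr fun h' => hc (h h')
    simp only [List.length_dropLast]; omega

theorem topLen_arcReplace (b : Bool) (s : ArcState) (O : Finset Page) :
    topLen s.T1 O + topLen s.T2 O ≤
      topLen (arcReplace b s).T1 O + topLen (arcReplace b s).T2 O + 1 := by
  unfold arcReplace topLen; split_ifs
  · have := List.length_takeWhile_le_dropLast (fun q => decide (q ∈ O)) s.T1
    simp only; omega
  · have := List.length_takeWhile_le_dropLast (fun q => decide (q ∈ O)) s.T2
    simp only; omega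

/-- The eviction `arcStep` performs on a request outside the directory, before it puts the
requested page at `MRU(T1)`. -/
def arcEvict (N : ℕ) (s : ArcState) : ArcState :=
  if s.T1.length + s.B1.length = N then
    if s.T1.length < N then
      arcReplace false { s with B1 := s.B1.dropLast }
    else
      { s with T1 := s.T1.dropLast }
  else if s.T1.length + s.B1.length < N ∧
      N ≤ s.T1.length + s.T2.length + s.B1.length + s.B2.length then
    arcReplace false
      (if s.T1.length + s.T2.length + s.B1.length + s.B2.length = 2 * N then
        { s with B2 := s.B2.dropLast }
      else s)
  else s

@[simp] theorem arcEvict_p : (arcEvict N s).p = s.p := by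
  unfold arcEvict; split_ifs <;> simp

theorem arcEvict_L1_sublist (N : ℕ) (s : ArcState) : (arcEvict N s).L1.Sublist s.L1 := by
  unfold arcEvict; split_ifs
  all_goals try rw [arcReplace_L1]
  all_goals first
    | exact List.Sublist.refl _
    | exact (List.dropLast_sublist _).append_left _
    | exact (List.dropLast_sublist _).append_right _

theorem arcEvict_L2_sublist (N : ℕ) (s : ArcState) : (arcEvict N s).L2.Sublist s.L2 := by
  unfold arcEvict; split_ifs
  all_goals try rw [arcReplace_L2]
  all_goals first
    | exact List.Sublist.refl _
    | exact (List.dropLast_sublist _).append_left _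

theorem arcStep_of_mem_T (h : x ∈ s.T1 ∨ x ∈ s.T2) :
    arcStep N s x = { s with T1 := s.T1.erase x, T2 := x :: s.T2.erase x } := by
  rw [arcStep, if_pos h]

theorem arcStep_of_mem_B1 (h : ¬(x ∈ s.T1 ∨ x ∈ s.T2)) (hB1 : x ∈ s.B1) :
    arcStep N s x =
      { arcReplace false { s with p := min (s.p + 1) N } with
        B1 := (arcReplace false { s with p := min (s.p + 1) N }).B1.erase x,
        T2 := x :: (arcReplace false { s with p := min (s.p + 1) N }).T2 } := by
  rw [arcStep, if_neg h, if_pos hB1]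

theorem arcStep_of_mem_B2 (h : ¬(x ∈ s.T1 ∨ x ∈ s.T2)) (hB1 : x ∉ s.B1) (hB2 : x ∈ s.B2) :
    arcStep N s x =
      { arcReplace true { s with p := s.p - 1 } with
        B2 := (arcReplace true { s with p := s.p - 1 }).B2.erase x,
        T2 := x :: (arcReplace true { s with p := s.p - 1 }).T2 } := by
  rw [arcStep, if_neg h, if_neg hB1, if_pos hB2]

theorem arcStep_of_notMem (h : x ∉ arcDir s) :
    arcStep N s x = { arcEvict N s with T1 := x :: (arcEvict N s).T1 } := by
  simp only [arcDir, List.mem_append, not_or] at h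
  rw [arcStep, if_neg (by tauto), if_neg h.1.2, if_neg h.2]
  rfl

theorem L1_arcStep_of_mem_B1 (h : ¬(x ∈ s.T1 ∨ x ∈ s.T2)) (hB1 : x ∈ s.B1) :
    (arcStep N s x).L1 = s.L1.erase x := by
  have hL1 := arcReplace_L1 false { s with p := min (s.p + 1) N }
  have hT1 := arcReplace_T1_sublist false { s with p := min (s.p + 1) N }
  rw [arcStep_of_mem_B1 h hB1]
  simp only [L1] at hL1 ⊢
  rw [← List.erase_append_right _ fun h' => h (Or.inl (hT1.subset h')), hL1]

theorem L2_arcStep_of_mem_B1 (h : ¬(x ∈ s.T1 ∨ x ∈ s.T2)) (hB1 : x ∈ s.B1) :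
    (arcStep N s x).L2 = x :: s.L2 := by
  have hL2 := arcReplace_L2 false { s with p := min (s.p + 1) N }
  rw [arcStep_of_mem_B1 h hB1]
  simp only [L2] at hL2 ⊢
  rw [List.cons_append, hL2]

theorem arcT_arcStep_of_mem_B1 (h : ¬(x ∈ s.T1 ∨ x ∈ s.T2)) (hB1 : x ∈ s.B1)
    (hT2 : s.T2 ≠ []) : arcT (arcStep N s x) = arcT s := by
  have := length_arcReplace false { s with p := min (s.p + 1) N } fun h' => absurd h' hT2
  rw [arcStep_of_mem_B1 h hB1, arcT, arcT]
  simp only [List.length_cons] at this ⊢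
  omega

theorem L1_arcStep_of_mem_B2 (h : ¬(x ∈ s.T1 ∨ x ∈ s.T2)) (hB1 : x ∉ s.B1) (hB2 : x ∈ s.B2) :
    (arcStep N s x).L1 = s.L1 := by
  rw [arcStep_of_mem_B2 h hB1 hB2]
  exact arcReplace_L1 true { s with p := s.p - 1 }

theorem L2_arcStep_of_mem_B2 (h : ¬(x ∈ s.T1 ∨ x ∈ s.T2)) (hB1 : x ∉ s.B1) (hB2 : x ∈ s.B2) :
    (arcStep N s x).L2 = x :: s.L2.erase x := by
  have hL2 := arcReplace_L2 true { s with p := s.p - 1 }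
  have hT2 := arcReplace_T2_sublist true { s with p := s.p - 1 }
  rw [arcStep_of_mem_B2 h hB1 hB2]
  simp only [L2] at hL2 ⊢
  rw [List.cons_append, ← List.erase_append_right _ fun h' => h (Or.inr (hT2.subset h')), hL2]

theorem arcT_arcStep_of_mem_B2 (h : ¬(x ∈ s.T1 ∨ x ∈ s.T2)) (hB1 : x ∉ s.B1) (hB2 : x ∈ s.B2)
    (hT2 : s.T2 = [] → 1 ≤ s.T1.length ∧ s.p - 1 < s.T1.length) :
    arcT (arcStep N s x) = arcT s := by
  have := length_arcReplace true { s with p := s.p - 1 } fun h' => ⟨(hT2 h').1, Or.inr (hT2 h').2⟩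
  rw [arcStep_of_mem_B2 h hB1 hB2, arcT, arcT]
  simp only [List.length_cons] at this ⊢
  omega

/-- With `N = 0` a miss still puts the requested page into `T1`, whence the guards `1 ≤ N`. -/
structure Valid (N : ℕ) (s : ArcState) : Prop where
  nodup : (arcDir s).Nodup
  p_le : s.p ≤ N
  one_le_of_hist : 1 ≤ s.B1.length + s.B2.length → 1 ≤ N
  cache_le : 1 ≤ N → s.T1.length + s.T2.length ≤ N
  cache_full : 1 ≤ s.B1.length + s.B2.length → s.T1.length + s.T2.length = N
  L1_le : 1 ≤ s.B1.length → s.T1.length + s.B1.length ≤ N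

namespace Valid

theorem nodup_L (hs : Valid N s) : (s.L1 ++ s.L2).Nodup :=
  (arcDir_perm s).nodup_iff.mp hs.nodup

theorem notMem_L2 (hs : Valid N s) (h : x ∈ s.L1) : x ∉ s.L2 :=
  fun h' => (List.nodup_append.mp hs.nodup_L).2.2 x h x h' rfl

theorem disjoint_T1_B1 (hs : Valid N s) : ∀ a ∈ s.T1, a ∉ s.B1 := by
  have := (List.nodup_append.mp hs.nodup_L).1
  simp only [L1, List.nodup_append] at this
  exact fun a ha hb => this.2.2 a ha a hb rfl

theorem disjoint_T2_B2 (hs : Valid N s) : ∀ a ∈ s.T2, a ∉ s.B2 := by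
  have := (List.nodup_append.mp hs.nodup_L).2.1
  simp only [L2, List.nodup_append] at this
  exact fun a ha hb => this.2.2 a ha a hb rfl

theorem notMem_T_of_mem_B1 (hs : Valid N s) (hx : x ∈ s.B1) : ¬(x ∈ s.T1 ∨ x ∈ s.T2) := by
  rintro (h | h)
  · exact hs.disjoint_T1_B1 x h hx
  · exact hs.notMem_L2 (List.mem_append_right _ hx) (List.mem_append_left _ h)

theorem T2_ne_nil (hs : Valid N s) (hB1 : s.B1 ≠ []) : s.T2 ≠ [] := by
  have hb := List.length_pos_iff.mpr hB1
  have := hs.cache_full (by omega)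
  have := hs.L1_le hb
  intro h
  simp only [h, List.length_nil] at *
  omega

theorem of_perm (hs : Valid N s) (hperm : (n.L1 ++ n.L2).Perm (s.L1 ++ s.L2))
    (hp : n.p ≤ N) (ht : arcT n = arcT s)
    (hL1 : 1 ≤ n.B1.length → n.T1.length + n.B1.length ≤ N) : Valid N n := by
  have hlen := hperm.length_eq
  simp only [List.length_append, length_L1, length_L2] at hlen
  unfold arcT at ht
  obtain ⟨hnd, -, hN, hle, hfull, -⟩ := hs
  exact ⟨(arcDir_perm n).nodup_iff.mpr (hperm.nodup_iff.mpr ((arcDir_perm s).nodup_iff.mp hnd)),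
    hp, fun h => hN (by omega), fun h => by have := hle h; omega,
    fun h => by have := hfull (by omega); omega, hL1⟩

/-- After the eviction there is room for the requested page in the cache and in `L1`. -/
theorem arcEvict_lengths (hs : Valid N s) :
    (1 ≤ N → arcT (arcEvict N s) < N) ∧
    (1 ≤ (arcEvict N s).B1.length + (arcEvict N s).B2.length → arcT (arcEvict N s) + 1 = N) ∧
    (1 ≤ (arcEvict N s).B1.length → (arcEvict N s).T1.length + (arcEvict N s).B1.length < N) := by
  obtain ⟨-, -, hN, hle, hfull, hL1⟩ := hs
  unfold arcEvict arcT
  split_ifs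
  · have hT2 : s.T2 ≠ [] := List.ne_nil_of_length_pos (by omega)
    have := length_arcReplace false { s with B1 := s.B1.dropLast } fun h => absurd h hT2
    have := length_L1_arcReplace false { s with B1 := s.B1.dropLast }
    simp only [List.length_dropLast] at *
    omega
  · dsimp only
    simp only [List.length_dropLast]
    omega
  · have hT2 : s.T2 ≠ [] := List.ne_nil_of_length_pos (by omega)
    have := length_arcReplace false { s with B2 := s.B2.dropLast } fun h => absurd h hT2
    have := length_L1_arcReplace false { s with B2 := s.B2.dropLast }
    dsimp only at *
    omega
  · have hT2 : s.T2 ≠ [] := List.ne_nil_of_length_pos (by omega)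
    have := length_arcReplace false s fun h => absurd h hT2
    have := length_L1_arcReplace false s
    omega
  · omega

end Valid

theorem valid_arcStep_of_mem_T (hs : Valid N s) (h : x ∈ s.T1 ∨ x ∈ s.T2) :
    Valid N (arcStep N s x) := by
  rw [arcStep_of_mem_T h]
  rcases h with h | h
  · have hx2 : x ∉ s.T2 := fun h' => hs.notMem_L2 (List.mem_append_left _ h)
      (List.mem_append_left _ h')
    have hlen := List.length_erase_of_mem h
    have hpos := List.length_pos_of_mem h
    refine hs.of_perm ?_ hs.p_le ?_ fun hb => ?_
    · simpa [L1, L2, List.erase_append_left _ h, List.erase_of_not_mem hx2]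
        using List.perm_erase_append_cons (List.mem_append_left s.B1 h) s.L2
    · simp only [arcT, List.length_cons, List.erase_of_not_mem hx2]; omega
    · dsimp only at hb ⊢; have := hs.L1_le hb; omega
  · have hx1 : x ∉ s.T1 := fun h' => hs.notMem_L2 (List.mem_append_left _ h')
      (List.mem_append_left _ h)
    have hlen := List.length_erase_of_mem h
    have hpos := List.length_pos_of_mem h
    refine hs.of_perm ?_ hs.p_le ?_ fun hb => ?_
    · simpa [L1, L2, List.erase_append_left _ h, List.erase_of_not_mem hx1]
        using (List.perm_cons_erase (List.mem_append_left s.B2 h)).symm.append_left s.L1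
    · simp only [arcT, List.length_cons, List.erase_of_not_mem hx1]; omega
    · dsimp only at hb ⊢; rw [List.erase_of_not_mem hx1]; exact hs.L1_le hb

theorem valid_arcStep_of_mem_B1 (hs : Valid N s) (hB1 : x ∈ s.B1) : Valid N (arcStep N s x) := by
  have h := hs.notMem_T_of_mem_B1 hB1
  have hxL : x ∈ s.L1 := List.mem_append_right _ hB1
  refine hs.of_perm ?_ ?_ (arcT_arcStep_of_mem_B1 h hB1 (hs.T2_ne_nil (List.ne_nil_of_mem hB1)))
    fun _ => ?_
  · rw [L1_arcStep_of_mem_B1 h hB1, L2_arcStep_of_mem_B1 h hB1]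
    exact List.perm_erase_append_cons hxL _
  · rw [arcStep_of_mem_B1 h hB1]
    simpa only [arcReplace_p] using min_le_right _ _
  · have hlen := congrArg List.length (L1_arcStep_of_mem_B1 (N := N) h hB1)
    rw [List.length_erase_of_mem hxL, length_L1, length_L1] at hlen
    have := hs.L1_le (List.length_pos_of_mem hB1)
    omega

theorem valid_arcStep_of_mem_B2 (hs : Valid N s) (h : ¬(x ∈ s.T1 ∨ x ∈ s.T2)) (hB1 : x ∉ s.B1)
    (hB2 : x ∈ s.B2) : Valid N (arcStep N s x) := by
  have hb := List.length_pos_of_mem hB2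
  have hN := hs.one_le_of_hist (by omega)
  have hfull := hs.cache_full (by omega)
  have hp := hs.p_le
  refine hs.of_perm ?_ ?_ (arcT_arcStep_of_mem_B2 h hB1 hB2 fun hT2 => ?_) fun hb1 => ?_
  · rw [L1_arcStep_of_mem_B2 h hB1 hB2, L2_arcStep_of_mem_B2 h hB1 hB2]
    exact (List.perm_cons_erase (List.mem_append_right _ hB2)).symm.append_left _
  · rw [arcStep_of_mem_B2 h hB1 hB2]
    simp only [arcReplace_p]
    omega
  · simp only [hT2, List.length_nil] at hfull
    omega
  · have hlen := congrArg List.length (L1_arcStep_of_mem_B2 (N := N) h hB1 hB2)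
    rw [length_L1, length_L1] at hlen
    have := hs.L1_le
    omega

theorem valid_arcStep_of_notMem (hs : Valid N s) (h : x ∉ arcDir s) : Valid N (arcStep N s x) := by
  have hsub := (arcEvict_L1_sublist N s).append (arcEvict_L2_sublist N s)
  obtain ⟨hle, hfull, hL1⟩ := hs.arcEvict_lengths
  rw [arcStep_of_notMem h]
  refine ⟨(arcDir_perm _).nodup_iff.mpr (List.nodup_cons.mpr ⟨fun hx => ?_, hs.nodup_L.sublist hsub⟩),
    by simpa using hs.p_le, fun hb => ?_, fun hN => ?_, fun hb => ?_, fun hb => ?_⟩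
  · exact h ((arcDir_perm s).mem_iff.mpr (hsub.subset hx))
  all_goals simp only [arcT, List.length_cons] at *
  · have := hfull hb; omega
  · have := hle hN; omega
  · have := hfull hb; omega
  · have := hL1 hb; omega

theorem valid_arcStep (hs : Valid N s) (x : Page) : Valid N (arcStep N s x) := by
  by_cases hT : x ∈ s.T1 ∨ x ∈ s.T2
  · exact valid_arcStep_of_mem_T hs hT
  by_cases hB1 : x ∈ s.B1
  · exact valid_arcStep_of_mem_B1 hs hB1
  by_cases hB2 : x ∈ s.B2
  · exact valid_arcStep_of_mem_B2 hs hT hB1 hB2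
  · refine valid_arcStep_of_notMem hs ?_
    simp only [arcDir, List.mem_append]
    tauto

theorem valid_init (N : ℕ) : Valid N ArcState.init :=
  ⟨List.nodup_nil, Nat.zero_le N, by simp [init], by simp [init], by simp [init], by simp [init]⟩

theorem valid_arcRun {s : ArcState} (hs : Valid N s) : ∀ σ : List Page, Valid N (arcRun N s σ)
  | [] => hs
  | x :: σ => valid_arcRun (valid_arcStep hs x) σ

theorem arcB1'_add_arcT1' (h : ∀ a ∈ s.T1, a ∉ s.B1) :
    arcB1' s O + arcT1' s O = topLen s.L1 O :=
  List.length_filter_takeWhile_append_add _ h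

theorem arcB2'_add_arcT2' (h : ∀ a ∈ s.T2, a ∉ s.B2) :
    arcB2' s O + arcT2' s O = topLen s.L2 O :=
  List.length_filter_takeWhile_append_add _ h

theorem arcPhi_arcStep_sub_le_of_mem_B1 (hs : Valid N s) (hB1 : x ∈ s.B1) (hxO : x ∈ O) :
    arcPhi (arcStep N s x) O - arcPhi s O ≤
      -2 + if x ∈ s.L1.takeWhile (fun r => decide (r ∈ O)) then 1 else 0 := by
  have hn := valid_arcStep_of_mem_B1 hs hB1
  have h := hs.notMem_T_of_mem_B1 hB1
  have hx (l : List Page) : topLen (x :: l) O = topLen l O + 1 := by simp [topLen, hxO]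
  have e1 := arcB1'_add_arcT1' (O := O) hs.disjoint_T1_B1
  have e2 := arcB2'_add_arcT2' (O := O) hs.disjoint_T2_B2
  have e1' := arcB1'_add_arcT1' (O := O) hn.disjoint_T1_B1
  have e2' := arcB2'_add_arcT2' (O := O) hn.disjoint_T2_B2
  have ht := arcT_arcStep_of_mem_B1 (N := N) h hB1 (hs.T2_ne_nil (List.ne_nil_of_mem hB1))
  have hL1 : topLen s.L1 O ≤ topLen (arcStep N s x).L1 O +
      if x ∈ s.L1.takeWhile (fun r => decide (r ∈ O)) then 1 else 0 := by
    rw [L1_arcStep_of_mem_B1 h hB1]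
    exact List.length_takeWhile_le_erase (p := fun r => decide (r ∈ O)) (decide_eq_true hxO) _
  have hL2 : topLen (arcStep N s x).L2 O = topLen s.L2 O + 1 := by
    rw [L2_arcStep_of_mem_B1 h hB1, hx]
  have hT : arcT1' s O + arcT2' s O ≤ arcT1' (arcStep N s x) O + arcT2' (arcStep N s x) O := by
    have := topLen_arcReplace false { s with p := min (s.p + 1) N } O
    rw [arcStep_of_mem_B1 h hB1]
    simp only [arcT1', arcT2', hx] at this ⊢
    omega
  have hp : (arcStep N s x).p ≤ s.p + 1 := by
    rw [arcStep_of_mem_B1 h hB1]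
    simp
  unfold arcPhi arcPhiAt
  rw [ht]
  split_ifs at hL1 ⊢ <;> omega

end ArcState

theorem arc_b1_miss_potential_general (N : ℕ) (σ : List Page) (C : ℕ → Finset Page)
    (hC : OptExec N σ C)
    (j : ℕ) (hj : j < σ.length)
    (s : ArcState) (hs : s = arcRun N ArcState.init (σ.take j))
    (hB1 : σ.getD j 0 ∈ s.B1) :
    arcPhi (arcStep N s (σ.getD j 0)) (C (j + 1)) - arcPhi s (C (j + 1)) ≤ -1 ∧
    (σ.getD j 0 ∈ (s.T1 ++ s.B1).takeWhile (fun r => decide (r ∈ C (j + 1))) →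
      arcPhi (arcStep N s (σ.getD j 0)) (C (j + 1)) - arcPhi s (C (j + 1)) ≤ -1) ∧
    (σ.getD j 0 ∉ (s.T1 ++ s.B1).takeWhile (fun r => decide (r ∈ C (j + 1))) →
      arcPhi (arcStep N s (σ.getD j 0)) (C (j + 1)) - arcPhi s (C (j + 1)) ≤ -2) := by
  have hv : s.Valid N := hs ▸ ArcState.valid_arcRun (ArcState.valid_init N) _
  have hΔ := ArcState.arcPhi_arcStep_sub_le_of_mem_B1 hv hB1 (hC.2.2 j hj).1
  split_ifs at hΔ with hx
  · exact ⟨by omega, fun _ => by omega, fun h => absurd hx h⟩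
  · exact ⟨by omega, fun h => absurd h hx, fun _ => by omega⟩

/-- Case II. In the parallel execution of ARC and OPT,
after phase `P(0)`, when ARC misses on `σ_j` and the requested page is in `B1`
(so `p` becomes `min (p+1) N`, REPLACE is called, and the page moves to
`MRU(T2)`), the change of `Φ = p − [(b₁'−t) + 2(t₁'−t) + 3(b₂'−t) + 4(t₂'−t)]`
(w.r.t. OPT's cache `C (j+1)`) satisfies `ΔΦ ≤ −1`; more precisely `ΔΦ ≤ −1`
if the page is in `B1'` and `ΔΦ ≤ −2` if the page is in `B1 − B1'`. -/
theorem arc_b1_miss_potential (N : ℕ) (σ : List Page) (C : ℕ → Finset Page)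
    (hC : OptExec N σ C) (hCopt : optFaults σ C = optCost N σ)
    (j : ℕ) (hj : j < σ.length)
    (hphase : N ≤ arcCost N ArcState.init (σ.take j))
    (s : ArcState) (hs : s = arcRun N ArcState.init (σ.take j))
    (hmiss : σ.getD j 0 ∉ s.T1 ∧ σ.getD j 0 ∉ s.T2)
    (hB1 : σ.getD j 0 ∈ s.B1) :
    arcPhi (arcStep N s (σ.getD j 0)) (C (j + 1)) - arcPhi s (C (j + 1)) ≤ -1 ∧
    (σ.getD j 0 ∈ (s.T1 ++ s.B1).takeWhile (fun r => decide (r ∈ C (j + 1))) →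
      arcPhi (arcStep N s (σ.getD j 0)) (C (j + 1)) - arcPhi s (C (j + 1)) ≤ -1) ∧
    (σ.getD j 0 ∉ (s.T1 ++ s.B1).takeWhile (fun r => decide (r ∈ C (j + 1))) →
      arcPhi (arcStep N s (σ.getD j 0)) (C (j + 1)) - arcPhi s (C (j + 1)) ≤ -2) :=
  arc_b1_miss_potential_general N σ C hC j hj s hs hB1
end
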